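/- arXiv:2305.04921 — 13 statements merged into one kernel-verified Lean document; each statement's English description precedes it below -/
import Mathlib

section
/- For every monotone function s : ℚ → ℚ and rationals x, y, the following are equivalent: s(x) ≠ y if and only if h_y ∘ s ∘ c_x ∈ {c_{y-1}, c_{y+1}}, where c_q denotes the constant function with value q and h_y is the monotone function sending arguments less than y to y-1, y to y, and arguments greater than y to y+1. -/
theorem step_eq_sub_one_or_eq_add_one_iff {K : Type*} [Ring K] [LinearOrder K]
    [IsStrictOrderedRing K] (y t : K) :
    ((if t < y then y - 1 else if t = y then y else y + 1) = y - 1 ∨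
      (if t < y then y - 1 else if t = y then y else y + 1) = y + 1) ↔ t ≠ y := by
  rcases lt_trichotomy t y with h | rfl | h
  · simp [h, h.ne]
  · simp [(sub_one_lt t).ne']
  · simp [h.ne', not_lt.mpr h.le]

theorem const_mem_pair_iff {α β : Type*} [Nonempty α] (b c d : β) :
    (fun _ : α => b) ∈ ({(fun _ : α => c), (fun _ : α => d)} : Set (α → β)) ↔ b = c ∨ b = d := by
  simp only [Set.mem_insert_iff, Set.mem_singleton_iff, funext_iff, forall_const]

theorem ne_iff_comp_mem_constants_general (s : ℚ → ℚ) (x y : ℚ) :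
    s x ≠ y ↔
      ((fun t : ℚ => if t < y then y - 1 else if t = y then y else y + 1) ∘ s ∘
          (fun _ : ℚ => x)) ∈
        ({(fun _ : ℚ => y - 1), (fun _ : ℚ => y + 1)} : Set (ℚ → ℚ)) :=
  -- `h_y ∘ s ∘ c_x` is definitionally the constant function with value `h_y (s x)`.
  (step_eq_sub_one_or_eq_add_one_iff y (s x)).symm.trans (const_mem_pair_iff _ _ _).symm

/-- For monotone `s : ℚ → ℚ` and rationals `x, y`:
`s x ≠ y` iff `h_y ∘ s ∘ c_x ∈ {c_{y-1}, c_{y+1}}`, where `c_q` is the constant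
function with value `q` and `h_y` sends arguments below `y` to `y-1`, `y` to `y`,
and arguments above `y` to `y+1`. -/
theorem ne_iff_comp_mem_constants (s : ℚ → ℚ) (hs : Monotone s) (x y : ℚ) :
    s x ≠ y ↔
      ((fun t : ℚ => if t < y then y - 1 else if t = y then y else y + 1) ∘ s ∘
          (fun _ : ℚ => x)) ∈
        ({(fun _ : ℚ => y - 1), (fun _ : ℚ => y + 1)} : Set (ℚ → ℚ)) :=
  ne_iff_comp_mem_constants_general s x y
end

section
/- Let 𝒯 be a topology on the monoid M_ℚ of monotone functions ℚ → ℚ making composition separately continuous (in particular all left and right translations continuous) and satisfying the T1 separation axiom. Then the pointwise topology is coarser than 𝒯; i.e., every set of the form {f : M_ℚ | f(x) = y} for rationals x, y is 𝒯-open. -/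
/-- The monoid of monotone functions on `ℚ`. -/
def MQ : Type := {f : ℚ → ℚ // Monotone f}

/-- Composition on `MQ`. -/
def MQ.comp (f g : MQ) : MQ := ⟨f.1 ∘ g.1, f.2.comp g.2⟩

/-!
Fix `x y : ℚ` and let `h_y` be the monotone three-step function taking the values `y - 1`, `y`,
`y + 1` below, at and above `y`. The map `s ↦ h_y ∘ s ∘ c_x` is a composite of translations,
hence continuous, and sends `f` to the constant `c_{h_y (f x)}`; it lands in the finite, hence
closed, set `{c_{y-1}, c_{y+1}}` exactly when `f x ≠ y`.
-/

namespace MQ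

def const (q : ℚ) : MQ := ⟨fun _ => q, monotone_const⟩

theorem const_injective : Function.Injective const :=
  fun _ _ h => congrFun (congrArg Subtype.val h) 0

theorem comp_const (f : MQ) (x : ℚ) : f.comp (const x) = const (f.1 x) := rfl

def step (y : ℚ) : MQ :=
  ⟨fun t => if t < y then y - 1 else if t = y then y else y + 1, by
    intro a b hab
    dsimp only
    split_ifs <;> grind⟩

theorem step_apply_mem_iff (y t : ℚ) : (step y).1 t ∈ ({y - 1, y + 1} : Set ℚ) ↔ t ≠ y := by
  simp only [step]
  split_ifs <;> grind

theorem setOf_apply_eq_eq_preimage (x y : ℚ) :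
    {f : MQ | f.1 x = y} =
      (fun s => (step y).comp (s.comp (const x))) ⁻¹' (const '' {y - 1, y + 1})ᶜ := by
  ext f
  simp only [Set.mem_ofPred_eq, Set.mem_preimage, Set.mem_compl_iff, comp_const,
    const_injective.mem_set_image, step_apply_mem_iff, not_not]

end MQ

/-- If `𝒯` is a T1 topology on the monoid of monotone functions on `ℚ` for which all
left and right translations (by composition) are continuous, then the pointwise
topology is coarser than `𝒯`: each set `{f | f x = y}` is `𝒯`-open. -/
theorem pointwise_coarser_of_T1_translation_continuous (T : TopologicalSpace MQ)
    (hT1 : @T1Space MQ T)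
    (hleft : ∀ t : MQ, @Continuous MQ MQ T T (fun s => MQ.comp t s))
    (hright : ∀ t : MQ, @Continuous MQ MQ T T (fun s => MQ.comp s t)) :
    ∀ x y : ℚ, @IsOpen MQ T {f : MQ | f.1 x = y} := by
  intro x y
  rw [MQ.setOf_apply_eq_eq_preimage]
  exact (Set.toFinite _).isClosed.isOpen_compl.preimage ((hleft _).comp (hright _))
end

section
/- Let s : ℚ → ℚ be a strictly monotone (injective monotone) function such that every limit point of its image (as a subset of ℝ) is irrational. Then for every rational q, sup s((-∞,q)∩ℚ) < s(q) < inf s((q,+∞)∩ℚ); in particular every rational is a discontinuity point of s. -/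
/-!
Since `s` is strictly monotone, `s q` bounds `s((-∞,q))` strictly from above. If the supremum
were `s q` itself, `s q` would lie in the closure of `s((-∞,q))`, hence be a limit point of the
image, and so be irrational, which a rational number is not. The infimum on the right is dual.
-/

open Set

namespace EReal

variable {ι : Type*} {f : ι → ℝ} {s : Set ι} {x : ℝ}

theorem mem_closure_image_of_sSup_eq (hs : s.Nonempty)
    (h : sSup ((fun i => (f i : EReal)) '' s) = x) : x ∈ closure (f '' s) := by
  rw [isEmbedding_coe.closure_eq_preimage_closure_image, mem_preimage, image_image, ← h]
  exact sSup_mem_closure (hs.image _)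

theorem mem_closure_image_of_sInf_eq (hs : s.Nonempty)
    (h : sInf ((fun i => (f i : EReal)) '' s) = x) : x ∈ closure (f '' s) := by
  rw [isEmbedding_coe.closure_eq_preimage_closure_image, mem_preimage, image_image, ← h]
  exact sInf_mem_closure (hs.image _)

end EReal

namespace StrictMono

variable {α : Type*} [LinearOrder α] {f : α → ℝ} {a : α}

theorem sSup_image_Iio_lt [NoMinOrder α] (hf : StrictMono f)
    (ha : f a ∉ closure (range f \ {f a})) :
    sSup ((fun x => (f x : EReal)) '' Iio a) < f a := by
  have hle : sSup ((fun x => (f x : EReal)) '' Iio a) ≤ f a :=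
    sSup_le <| by rintro _ ⟨x, hx, rfl⟩; exact EReal.coe_le_coe_iff.2 (hf hx).le
  refine hle.lt_of_ne fun heq => ha ?_
  refine closure_mono ?_ (EReal.mem_closure_image_of_sSup_eq nonempty_Iio heq)
  rintro _ ⟨x, hx, rfl⟩
  exact ⟨mem_range_self x, (hf hx).ne⟩

theorem lt_sInf_image_Ioi [NoMaxOrder α] (hf : StrictMono f)
    (ha : f a ∉ closure (range f \ {f a})) :
    (f a : EReal) < sInf ((fun x => (f x : EReal)) '' Ioi a) := by
  have hle : (f a : EReal) ≤ sInf ((fun x => (f x : EReal)) '' Ioi a) :=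
    le_sInf <| by rintro _ ⟨x, hx, rfl⟩; exact EReal.coe_le_coe_iff.2 (hf hx).le
  refine hle.lt_of_ne fun heq => ha ?_
  refine closure_mono ?_ (EReal.mem_closure_image_of_sInf_eq nonempty_Ioi heq.symm)
  rintro _ ⟨x, hx, rfl⟩
  exact ⟨mem_range_self x, (hf hx).ne'⟩

end StrictMono

/-- If `s : ℚ → ℚ` is monotone and injective and every limit point (in `ℝ`) of its
image is irrational, then for every rational `q`,
`sup s((-∞,q)∩ℚ) < s q < inf s((q,+∞)∩ℚ)`; in particular every rational is a
discontinuity point of `s`. -/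
theorem strictMono_jumps_at_rationals (s : ℚ → ℚ) (hmono : Monotone s)
    (hinj : Function.Injective s)
    (hLP : ∀ γ : ℝ, γ ∈ closure ((Set.range fun q : ℚ => (s q : ℝ)) \ {γ}) →
      Irrational γ) :
    ∀ q : ℚ,
      sSup ((fun p : ℚ => ((s p : ℝ) : EReal)) '' {p : ℚ | p < q}) <
          ((s q : ℝ) : EReal) ∧
      ((s q : ℝ) : EReal) <
          sInf ((fun p : ℚ => ((s p : ℝ) : EReal)) '' {p : ℚ | q < p}) := by
  intro q
  have hs : StrictMono fun p : ℚ => (s p : ℝ) :=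
    Rat.cast_strictMono.comp (hmono.strictMono_of_injective hinj)
  have hq : (s q : ℝ) ∉ closure ((range fun p : ℚ => (s p : ℝ)) \ {(s q : ℝ)}) :=
    fun h => Rat.not_irrational _ (hLP _ h)
  exact ⟨hs.sSup_image_Iio_lt hq, hs.lt_sInf_image_Ioi hq⟩
end

section
/- For every subset A ⊆ ℚ there exists a monotone function f : ℚ → ℚ with image exactly A such that for every w ∈ A, the preimage f⁻¹({w}) is an open interval of ℚ with irrational endpoints (i.e., of the form (r,t) ∩ ℚ with r, t ∈ (ℝ∖ℚ) ∪ {±∞}). In particular, there exists a surjective monotone function on ℚ all of whose point-preimages are intervals with irrational endpoints. -/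
/-!
Take an order isomorphism `e : ℚ ≃o A ×ₗ ℚ` (back-and-forth) and let `f` be the first coordinate
of `e`. Every fibre of `f` is convex and has neither a least nor a greatest element, so it is the
set of rationals strictly between its infimum and supremum in `EReal`. If the supremum were a
rational `p`, then `p` would lie outside the fibre, yet the fibre of `p` reaches below `p` and
would have to meet it; dually for the infimum.
-/

open Set

lemma EReal.ratCast_lt_ratCast {x y : ℚ} : ((x : ℝ) : EReal) < ((y : ℝ) : EReal) ↔ x < y := by
  exact_mod_cast Iff.rfl

lemma mem_iff_sInf_lt_and_lt_sSup {F : Set ℚ} (hF : F.OrdConnected)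
    (hlo : ∀ x ∈ F, ∃ y ∈ F, y < x) (hhi : ∀ x ∈ F, ∃ y ∈ F, x < y) (q : ℚ) :
    q ∈ F ↔ sInf ((fun x : ℚ => ((x : ℝ) : EReal)) '' F) < ((q : ℝ) : EReal) ∧
      ((q : ℝ) : EReal) < sSup ((fun x : ℚ => ((x : ℝ) : EReal)) '' F) := by
  simp only [sInf_lt_iff, lt_sSup_iff, exists_mem_image, EReal.ratCast_lt_ratCast]
  refine ⟨fun hq => ⟨hlo q hq, hhi q hq⟩, ?_⟩
  rintro ⟨⟨x, hx, hxq⟩, ⟨y, hy, hqy⟩⟩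
  exact hF.out hx hy ⟨hxq.le, hqy.le⟩

section Fibres

variable {β : Type*} [PartialOrder β] {f : ℚ → β}

lemma fibre_eq_iff_sInf_lt_and_lt_sSup (hf : Monotone f) (hlo : ∀ p, ∃ x < p, f x = f p)
    (hhi : ∀ p, ∃ y, p < y ∧ f y = f p) (w : β) (q : ℚ) :
    f q = w ↔ sInf ((fun x : ℚ => ((x : ℝ) : EReal)) '' (f ⁻¹' {w})) < ((q : ℝ) : EReal) ∧
      ((q : ℝ) : EReal) < sSup ((fun x : ℚ => ((x : ℝ) : EReal)) '' (f ⁻¹' {w})) := by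
  refine mem_iff_sInf_lt_and_lt_sSup (ordConnected_singleton.preimage_mono hf) ?_ ?_ q
  · rintro x rfl
    obtain ⟨y, hyx, hy⟩ := hlo x
    exact ⟨y, hy, hyx⟩
  · rintro x rfl
    obtain ⟨y, hxy, hy⟩ := hhi x
    exact ⟨y, hy, hxy⟩

lemma sSup_fibre_eq_top_or_irrational (hf : Monotone f) (hlo : ∀ p, ∃ x < p, f x = f p)
    (hhi : ∀ p, ∃ y, p < y ∧ f y = f p) {w : β} (hw : w ∈ range f) :
    sSup ((fun x : ℚ => ((x : ℝ) : EReal)) '' (f ⁻¹' {w})) = ⊤ ∨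
      ∃ τ : ℝ, Irrational τ ∧ sSup ((fun x : ℚ => ((x : ℝ) : EReal)) '' (f ⁻¹' {w})) = τ := by
  set t := sSup ((fun x : ℚ => ((x : ℝ) : EReal)) '' (f ⁻¹' {w}))
  have hmem := fibre_eq_iff_sInf_lt_and_lt_sSup hf hlo hhi w
  obtain ⟨q, rfl⟩ := hw
  have hbot : t ≠ ⊥ := ((hmem q).1 rfl).2.ne_bot
  refine or_iff_not_imp_left.2 fun htop => ⟨t.toReal, ?_, (EReal.coe_toReal htop hbot).symm⟩
  rintro ⟨p, hp⟩
  have htp : t = ((p : ℝ) : EReal) := by rw [hp, EReal.coe_toReal htop hbot]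
  have hpq : f p ≠ f q := fun h => ((hmem p).1 h).2.ne htp.symm
  obtain ⟨y, hyp, hy⟩ := hlo p
  obtain ⟨x, hx, hyx⟩ : ∃ x, f x = f q ∧ y < x := by
    have : ((y : ℝ) : EReal) < t := htp ▸ EReal.ratCast_lt_ratCast.2 hyp
    simpa [t, lt_sSup_iff, EReal.ratCast_lt_ratCast] using this
  have hxp : x < p := EReal.ratCast_lt_ratCast.1 (htp ▸ ((hmem x).1 hx).2)
  have hfxp : f x = f p := (ordConnected_singleton.preimage_mono hf).out hy rfl ⟨hyx.le, hxp.le⟩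
  exact hpq (hfxp.symm.trans hx)

lemma sInf_fibre_eq_bot_or_irrational (hf : Monotone f) (hlo : ∀ p, ∃ x < p, f x = f p)
    (hhi : ∀ p, ∃ y, p < y ∧ f y = f p) {w : β} (hw : w ∈ range f) :
    sInf ((fun x : ℚ => ((x : ℝ) : EReal)) '' (f ⁻¹' {w})) = ⊥ ∨
      ∃ ρ : ℝ, Irrational ρ ∧ sInf ((fun x : ℚ => ((x : ℝ) : EReal)) '' (f ⁻¹' {w})) = ρ := by
  set r := sInf ((fun x : ℚ => ((x : ℝ) : EReal)) '' (f ⁻¹' {w}))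
  have hmem := fibre_eq_iff_sInf_lt_and_lt_sSup hf hlo hhi w
  obtain ⟨q, rfl⟩ := hw
  have htop : r ≠ ⊤ := ((hmem q).1 rfl).1.ne_top
  refine or_iff_not_imp_left.2 fun hbot => ⟨r.toReal, ?_, (EReal.coe_toReal htop hbot).symm⟩
  rintro ⟨p, hp⟩
  have hrp : r = ((p : ℝ) : EReal) := by rw [hp, EReal.coe_toReal htop hbot]
  have hpq : f p ≠ f q := fun h => ((hmem p).1 h).1.ne' hrp.symm
  obtain ⟨y, hpy, hy⟩ := hhi p
  obtain ⟨x, hx, hxy⟩ : ∃ x, f x = f q ∧ x < y := by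
    have : r < ((y : ℝ) : EReal) := hrp ▸ EReal.ratCast_lt_ratCast.2 hpy
    simpa [r, sInf_lt_iff, EReal.ratCast_lt_ratCast] using this
  have hpx : p < x := EReal.ratCast_lt_ratCast.1 (hrp ▸ ((hmem x).1 hx).1)
  have hxp : f x = f p := (ordConnected_singleton.preimage_mono hf).out rfl hy ⟨hpx.le, hxy.le⟩
  exact hpq (hxp.symm.trans hx)

end Fibres

section Lex

variable {α : Type*} [LinearOrder α]

lemma exists_orderIso_rat_lex [Countable α] [Nonempty α] : Nonempty (ℚ ≃o α ×ₗ ℚ) :=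
  haveI : Countable (α ×ₗ ℚ) := Countable.of_equiv (α × ℚ) toLex
  Order.iso_of_countable_dense ℚ (α ×ₗ ℚ)

variable (e : ℚ ≃o α ×ₗ ℚ)

lemma OrderIso.surjective_fst_lex : Function.Surjective fun q => (ofLex (e q)).1 :=
  fun a => ⟨e.symm (toLex (a, 0)), by simp⟩

lemma OrderIso.exists_lt_fst_lex_eq (p : ℚ) : ∃ x < p, (ofLex (e x)).1 = (ofLex (e p)).1 := by
  refine ⟨e.symm (toLex ((ofLex (e p)).1, (ofLex (e p)).2 - 1)), ?_, by simp⟩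
  rw [e.symm_apply_lt]
  exact Prod.Lex.toLex_lt_toLex.2 (Or.inr ⟨rfl, sub_one_lt _⟩)

lemma OrderIso.exists_gt_fst_lex_eq (p : ℚ) : ∃ y, p < y ∧ (ofLex (e y)).1 = (ofLex (e p)).1 := by
  refine ⟨e.symm (toLex ((ofLex (e p)).1, (ofLex (e p)).2 + 1)), ?_, by simp⟩
  rw [e.lt_symm_apply]
  exact Prod.Lex.toLex_lt_toLex.2 (Or.inr ⟨rfl, lt_add_one _⟩)

end Lex

/-- For every nonempty `A ⊆ ℚ` there is a monotone `f : ℚ → ℚ` with image exactly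
`A` whose point-preimages are intervals of `ℚ` with irrational (or infinite)
endpoints. -/
theorem exists_monotone_range_with_irrational_fibres (A : Set ℚ) (hA : A.Nonempty) :
    ∃ f : ℚ → ℚ, Monotone f ∧ Set.range f = A ∧
      ∀ w ∈ A, ∃ r t : EReal,
        (r = ⊥ ∨ ∃ ρ : ℝ, Irrational ρ ∧ r = (ρ : EReal)) ∧
        (t = ⊤ ∨ ∃ τ : ℝ, Irrational τ ∧ t = (τ : EReal)) ∧
        (∀ q : ℚ, f q = w ↔ (r < ((q : ℝ) : EReal) ∧ ((q : ℝ) : EReal) < t)) := by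
  have := hA.to_subtype
  obtain ⟨e⟩ := exists_orderIso_rat_lex (α := A)
  set f : ℚ → ℚ := fun q => ((ofLex (e q)).1 : ℚ)
  have hf : Monotone f := fun a b h => Prod.Lex.monotone_fst_ofLex (e.monotone h)
  have hlo : ∀ p, ∃ x < p, f x = f p := fun p =>
    (e.exists_lt_fst_lex_eq p).imp fun _ h => ⟨h.1, congrArg Subtype.val h.2⟩
  have hhi : ∀ p, ∃ y, p < y ∧ f y = f p := fun p =>
    (e.exists_gt_fst_lex_eq p).imp fun _ h => ⟨h.1, congrArg Subtype.val h.2⟩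
  have hrange : range f = A := by
    rw [← Subtype.range_coe (s := A), ← e.surjective_fst_lex.range_comp]
    rfl
  refine ⟨f, hf, hrange, fun w hw => ⟨_, _, ?_, ?_, fibre_eq_iff_sInf_lt_and_lt_sSup hf hlo hhi w⟩⟩
  · exact sInf_fibre_eq_bot_or_irrational hf hlo hhi (hrange ▸ hw)
  · exact sSup_fibre_eq_top_or_irrational hf hlo hhi (hrange ▸ hw)
end

section
/- There exists an injective monotone function g : ℚ → ℚ whose image is unbounded below and above, which has no irrational discontinuity points (for every irrational γ, sup g((-∞,γ)∩ℚ) = inf g((γ,+∞)∩ℚ)), and all of whose image's limit points in ℝ are irrational. -/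
/-!
Put `w k = 2 ^ (-2 ^ (k + 1))`, so that `w (k + 1) = w k ^ 2`. Above each integer hangs a binary
tree of rationals: the subtree with base point `c` at depth `k` has its root at `c + 2 w k`, its two
subtrees have base points `c + w k` and `c + 3 w k` at depth `k + 1`, and it lies in
`(c + w k, c + 4 w k)`. The integers and all tree nodes form a countable dense order without
endpoints; `g` is an order isomorphism from `ℚ` onto it (Cantor).

A cut of the image at an irrational has no endpoints, and can be followed down the trees through
subtrees of width `3 w k` meeting both of its sides, so `sup = inf`. Base points at depth `k + 1`
lie in `w k • ℤ`, while the subtree there has width `3 w k ^ 2`; hence, as in Liouville's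
argument, a rational of denominator `D` with `5 D w k < 1` keeps distance `w (k + 1)` from all
other nodes.
-/

open Set

namespace GenericInjection

section Gaps

variable {α : Type*} [LinearOrder α]

structure IsGap (A B : Set α) : Prop where
  nonempty_left : A.Nonempty
  nonempty_right : B.Nonempty
  lt : ∀ a ∈ A, ∀ b ∈ B, a < b
  exists_gt : ∀ a ∈ A, ∃ a' ∈ A, a < a'
  exists_lt : ∀ b ∈ B, ∃ b' ∈ B, b' < b

structure Straddles (A B W : Set α) : Prop where
  subset : W ⊆ A ∪ B
  ordConnected : ∀ x ∈ W, ∀ y ∈ W, (A ∪ B) ∩ Icc x y ⊆ W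
  inter_left : (A ∩ W).Nonempty
  inter_right : (B ∩ W).Nonempty

lemma Straddles.inter {A B W I : Set α} (hW : Straddles A B W) (hI : I.OrdConnected)
    (ha : (A ∩ (W ∩ I)).Nonempty) (hb : (B ∩ (W ∩ I)).Nonempty) :
    Straddles A B (W ∩ I) where
  subset := inter_subset_left.trans hW.subset
  ordConnected x hx y hy _ hs := ⟨hW.ordConnected x hx.1 y hy.1 hs, hI.out hx.2 hy.2 hs.2⟩
  inter_left := ha
  inter_right := hb

lemma IsGap.straddles_inter_Iio_or_Ioi {A B W : Set α} (h : IsGap A B) (hW : Straddles A B W)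
    {p : α} (hp : p ∈ W) : Straddles A B (W ∩ Iio p) ∨ Straddles A B (W ∩ Ioi p) := by
  rcases hW.subset hp with hpA | hpB
  · obtain ⟨b, hbB, hbW⟩ := hW.inter_right
    obtain ⟨a, haA, hpa⟩ := h.exists_gt p hpA
    have haW : a ∈ W := hW.ordConnected p hp b hbW ⟨Or.inl haA, hpa.le, (h.lt a haA b hbB).le⟩
    exact Or.inr <|
      hW.inter ordConnected_Ioi ⟨a, haA, haW, hpa⟩ ⟨b, hbB, hbW, h.lt p hpA b hbB⟩
  · obtain ⟨a, haA, haW⟩ := hW.inter_left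
    obtain ⟨b, hbB, hbp⟩ := h.exists_lt p hpB
    have hbW : b ∈ W := hW.ordConnected a haW p hp ⟨Or.inr hbB, (h.lt a haA b hbB).le, hbp.le⟩
    exact Or.inl <|
      hW.inter ordConnected_Iio ⟨a, haA, haW, h.lt a haA p hpB⟩ ⟨b, hbB, hbW, hbp⟩

end Gaps

lemma inv_mul_den_le_abs_sub {n : ℕ} (hn : 0 < n) {x q : ℚ}
    (hx : x ∈ AddSubgroup.zmultiples (n : ℚ)⁻¹) (hxq : x ≠ q) :
    ((n : ℚ) * q.den)⁻¹ ≤ |x - q| := by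
  obtain ⟨z, rfl⟩ := hx
  have hnd : (0 : ℚ) < n * q.den := by positivity
  have hkey : z • (n : ℚ)⁻¹ - q = ((z * q.den - q.num * n : ℤ) : ℚ) / (n * q.den) := by
    rw [zsmul_eq_mul, eq_div_iff hnd.ne']
    push_cast
    rw [← Rat.mul_den_eq_num q]
    field_simp
  have hz : z * q.den - q.num * n ≠ 0 := by
    intro h
    rw [h, Int.cast_zero, zero_div, sub_eq_zero] at hkey
    exact hxq hkey
  rw [hkey, abs_div, abs_of_pos hnd, inv_eq_one_div]
  gcongr
  exact_mod_cast Int.one_le_abs hz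

def weight (k : ℕ) : ℚ := ((2 : ℚ) ^ 2 ^ (k + 1))⁻¹

lemma weight_pos (k : ℕ) : 0 < weight k := by
  unfold weight
  positivity

lemma weight_succ (k : ℕ) : weight (k + 1) = weight k ^ 2 := by
  simp only [weight, inv_pow, ← pow_mul, ← pow_succ]

lemma weight_le_quarter (k : ℕ) : weight k ≤ 1 / 4 := by
  rw [weight, one_div, show (4 : ℚ) = 2 ^ 2 ^ 1 by norm_num]
  gcongr <;> norm_num

lemma four_mul_weight_succ_le (k : ℕ) : 4 * weight (k + 1) ≤ weight k := by
  rw [weight_succ]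
  nlinarith [weight_pos k, weight_le_quarter k]

lemma exists_weight_lt {ε : ℚ} (hε : 0 < ε) : ∃ k, weight k < ε := by
  have hpow : ∀ k, weight k ≤ (1 / 4) ^ k := by
    intro k
    induction k with
    | zero => norm_num [weight]
    | succ k ih => rw [pow_succ]; linarith [four_mul_weight_succ_le k]
  obtain ⟨k, hk⟩ := exists_pow_lt_of_lt_one hε (by norm_num : (1 / 4 : ℚ) < 1)
  exact ⟨k, (hpow k).trans_lt hk⟩

def grid (k : ℕ) : AddSubgroup ℚ := AddSubgroup.zmultiples ((2 : ℚ) ^ 2 ^ k)⁻¹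

lemma weight_mem_grid (k : ℕ) : weight k ∈ grid (k + 1) := AddSubgroup.mem_zmultiples _

lemma intCast_mem_grid (m : ℤ) (k : ℕ) : (m : ℚ) ∈ grid k :=
  AddSubgroup.mem_zmultiples_iff.2 ⟨m * 2 ^ 2 ^ k, by rw [zsmul_eq_mul]; push_cast; field_simp⟩

lemma grid_mono : Monotone grid := by
  refine monotone_nat_of_le_succ fun k =>
    AddSubgroup.zmultiples_le.2 (AddSubgroup.mem_zmultiples_iff.2 ⟨2 ^ 2 ^ k, ?_⟩)
  rw [zsmul_eq_mul, pow_succ, pow_mul]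
  push_cast
  field_simp

lemma weight_div_den_le_abs_sub {k : ℕ} {x q : ℚ} (hx : x ∈ grid (k + 1)) (hxq : x ≠ q) :
    weight k / q.den ≤ |x - q| := by
  have h := inv_mul_den_le_abs_sub (n := 2 ^ 2 ^ (k + 1)) (by positivity)
    (by simpa [grid] using hx) hxq
  rwa [mul_inv, ← div_eq_mul_inv, Nat.cast_pow, Nat.cast_ofNat] at h

def node (c : ℚ) (k : ℕ) : List Bool → ℚ
  | [] => c + 2 * weight k
  | false :: r => node (c + weight k) (k + 1) r
  | true :: r => node (c + 3 * weight k) (k + 1) r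

lemma node_mem_Ioo (c : ℚ) (k : ℕ) (r : List Bool) :
    node c k r ∈ Ioo (c + weight k) (c + 4 * weight k) := by
  induction r generalizing c k with
  | nil => constructor <;> simp only [node] <;> linarith [weight_pos k]
  | cons b r ih =>
    have := four_mul_weight_succ_le k
    have := weight_pos (k + 1)
    cases b
    · obtain ⟨h₁, h₂⟩ := ih (c + weight k) (k + 1)
      constructor <;> simp only [node] <;> linarith
    · obtain ⟨h₁, h₂⟩ := ih (c + 3 * weight k) (k + 1)
      constructor <;> simp only [node] <;> linarith

lemma node_false_lt (c : ℚ) (k : ℕ) (r : List Bool) :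
    node c k (false :: r) < c + 2 * weight k := by
  show node (c + weight k) (k + 1) r < _
  linarith [(node_mem_Ioo (c + weight k) (k + 1) r).2, four_mul_weight_succ_le k]

lemma lt_node_true (c : ℚ) (k : ℕ) (r : List Bool) :
    c + 2 * weight k < node c k (true :: r) := by
  show _ < node (c + 3 * weight k) (k + 1) r
  linarith [(node_mem_Ioo (c + 3 * weight k) (k + 1) r).1, weight_pos k, weight_pos (k + 1)]

lemma range_node_inter_Iio (c : ℚ) (k : ℕ) :
    range (node c k) ∩ Iio (c + 2 * weight k) = range (node (c + weight k) (k + 1)) := by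
  ext x
  constructor
  · rintro ⟨⟨r, rfl⟩, hx⟩
    match r with
    | [] => exact (lt_irrefl (c + 2 * weight k) hx).elim
    | false :: r => exact ⟨r, rfl⟩
    | true :: r => exact absurd hx (lt_node_true c k r).not_gt
  · rintro ⟨r, rfl⟩
    exact ⟨⟨false :: r, rfl⟩, node_false_lt c k r⟩

lemma range_node_inter_Ioi (c : ℚ) (k : ℕ) :
    range (node c k) ∩ Ioi (c + 2 * weight k) = range (node (c + 3 * weight k) (k + 1)) := by
  ext x
  constructor
  · rintro ⟨⟨r, rfl⟩, hx⟩
    match r with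
    | [] => exact (lt_irrefl (c + 2 * weight k) hx).elim
    | false :: r => exact absurd hx (node_false_lt c k r).not_gt
    | true :: r => exact ⟨r, rfl⟩
  · rintro ⟨r, rfl⟩
    exact ⟨⟨true :: r, rfl⟩, lt_node_true c k r⟩

lemma exists_node_lt (c : ℚ) (k : ℕ) (r : List Bool) : ∃ r', node c k r' < node c k r := by
  induction r generalizing c k with
  | nil => exact ⟨[false], node_false_lt c k []⟩
  | cons b r ih =>
    cases b
    · obtain ⟨r', h⟩ := ih (c + weight k) (k + 1)
      exact ⟨false :: r', h⟩
    · exact ⟨[], lt_node_true c k r⟩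

lemma exists_lt_node (c : ℚ) (k : ℕ) (r : List Bool) : ∃ r', node c k r < node c k r' := by
  induction r generalizing c k with
  | nil => exact ⟨[true], lt_node_true c k []⟩
  | cons b r ih =>
    cases b
    · exact ⟨[], node_false_lt c k r⟩
    · obtain ⟨r', h⟩ := ih (c + 3 * weight k) (k + 1)
      exact ⟨true :: r', h⟩

lemma exists_node_btwn {c : ℚ} {k : ℕ} {r r' : List Bool} (h : node c k r < node c k r') :
    ∃ r'', node c k r < node c k r'' ∧ node c k r'' < node c k r' := by
  induction r generalizing c k r' with
  | nil =>
    match r' with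
    | [] => exact absurd h (lt_irrefl _)
    | false :: r' => exact absurd h (node_false_lt c k r').not_gt
    | true :: r' =>
      obtain ⟨r'', hr''⟩ := exists_node_lt (c + 3 * weight k) (k + 1) r'
      exact ⟨true :: r'', lt_node_true c k r'', hr''⟩
  | cons b r ih =>
    match b, r' with
    | false, [] =>
      obtain ⟨r'', hr''⟩ := exists_lt_node (c + weight k) (k + 1) r
      exact ⟨false :: r'', hr'', node_false_lt c k r''⟩
    | false, false :: r' =>
      obtain ⟨r'', hr''⟩ := ih h
      exact ⟨false :: r'', hr''⟩
    | false, true :: r' => exact ⟨[], node_false_lt c k r, lt_node_true c k r'⟩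
    | true, [] => exact absurd h (lt_node_true c k r).not_gt
    | true, false :: r' => exact absurd h ((node_false_lt c k r').trans (lt_node_true c k r)).not_gt
    | true, true :: r' =>
      obtain ⟨r'', hr''⟩ := ih h
      exact ⟨true :: r'', hr''⟩

lemma node_mem_grid_or_mem_range {c : ℚ} {k M : ℕ} (hc : c ∈ grid k) (hk : k ≤ M)
    (r : List Bool) :
    node c k r ∈ grid M ∨ ∃ c' ∈ grid M, node c k r ∈ range (node c' M) := by
  rcases hk.eq_or_lt with rfl | hk
  · exact Or.inr ⟨c, hc, r, rfl⟩
  have hc' : c ∈ grid (k + 1) := grid_mono k.le_succ hc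
  have hw := weight_mem_grid k
  match r with
  | [] => exact Or.inl (grid_mono hk (add_mem hc' (AddSubgroup.nsmul_mem _ hw 2)))
  | false :: r => exact node_mem_grid_or_mem_range (add_mem hc' hw) hk r
  | true :: r => exact node_mem_grid_or_mem_range (add_mem hc' (AddSubgroup.nsmul_mem _ hw 3)) hk r
termination_by M - k

def nodeSet : Set ℚ := range ((↑) : ℤ → ℚ) ∪ ⋃ m : ℤ, range (node m 0)

lemma intCast_mem_nodeSet (m : ℤ) : (m : ℚ) ∈ nodeSet := Or.inl ⟨m, rfl⟩

lemma range_node_subset_nodeSet (m : ℤ) : range (node m 0) ⊆ nodeSet :=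
  subset_union_of_subset_right (subset_iUnion (fun m : ℤ => range (node m 0)) m) _

lemma node_zero_mem_Ioo (m : ℤ) (r : List Bool) : node m 0 r ∈ Ioo (m : ℚ) (m + 1) := by
  have h := node_mem_Ioo m 0 r
  have hw : weight 0 = 1 / 4 := by norm_num [weight]
  rw [hw] at h
  constructor <;> linarith [h.1, h.2]

lemma mem_range_node_of_mem_Ioo {m : ℤ} {x : ℚ} (hx : x ∈ nodeSet)
    (hx' : x ∈ Ioo (m : ℚ) (m + 1)) :
    x ∈ range (node m 0) := by
  rcases hx with ⟨n, rfl⟩ | hx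
  · have h₁ : m < n := by exact_mod_cast hx'.1
    have h₂ : n < m + 1 := by exact_mod_cast hx'.2
    omega
  · obtain ⟨n, r, rfl⟩ := mem_iUnion.1 hx
    obtain ⟨h₁, h₂⟩ := node_zero_mem_Ioo n r
    have h₃ : (m : ℚ) < n + 1 := hx'.1.trans h₂
    have h₄ : (n : ℚ) < m + 1 := h₁.trans hx'.2
    have : n = m := by
      have : m < n + 1 := by exact_mod_cast h₃
      have : n < m + 1 := by exact_mod_cast h₄
      omega
    exact ⟨r, by rw [this]⟩

lemma exists_mem_nodeSet_btwn {x y : ℚ} (hx : x ∈ nodeSet) (hy : y ∈ nodeSet) (hxy : x < y) :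
    ∃ z ∈ nodeSet, x < z ∧ z < y := by
  rcases hx with ⟨m, rfl⟩ | hx <;> rcases hy with ⟨n, rfl⟩ | hy
  · obtain ⟨h₁, h₂⟩ := node_zero_mem_Ioo m []
    have : (m : ℚ) + 1 ≤ n := by exact_mod_cast Int.cast_lt.1 hxy
    exact ⟨_, range_node_subset_nodeSet m ⟨[], rfl⟩, h₁, by linarith⟩
  · obtain ⟨n, r, rfl⟩ := mem_iUnion.1 hy
    obtain ⟨r', hr'⟩ := exists_node_lt n 0 r
    have : (m : ℚ) ≤ n := by
      have := hxy.trans (node_zero_mem_Ioo n r).2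
      exact_mod_cast Int.lt_add_one_iff.1 (by exact_mod_cast this)
    exact ⟨_, range_node_subset_nodeSet n ⟨r', rfl⟩,
      this.trans_lt (node_zero_mem_Ioo n r').1, hr'⟩
  · obtain ⟨m, r, rfl⟩ := mem_iUnion.1 hx
    obtain ⟨r', hr'⟩ := exists_lt_node m 0 r
    have : (m : ℚ) + 1 ≤ n := by
      have := (node_zero_mem_Ioo m r).1.trans hxy
      exact_mod_cast Int.cast_lt.1 this
    exact ⟨_, range_node_subset_nodeSet m ⟨r', rfl⟩, hr',
      (node_zero_mem_Ioo m r').2.trans_le this⟩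
  · obtain ⟨m, r, rfl⟩ := mem_iUnion.1 hx
    obtain ⟨n, r', rfl⟩ := mem_iUnion.1 hy
    obtain ⟨hx₁, hx₂⟩ := node_zero_mem_Ioo m r
    obtain ⟨hy₁, hy₂⟩ := node_zero_mem_Ioo n r'
    rcases lt_trichotomy m n with hmn | rfl | hmn
    · have : (m : ℚ) + 1 ≤ n := by exact_mod_cast hmn
      exact ⟨_, intCast_mem_nodeSet (m + 1), by push_cast; linarith, by push_cast; linarith⟩
    · obtain ⟨r'', h₁, h₂⟩ := exists_node_btwn hxy
      exact ⟨_, range_node_subset_nodeSet m ⟨r'', rfl⟩, h₁, h₂⟩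
    · have : (n : ℚ) + 1 ≤ m := by exact_mod_cast hmn
      linarith

instance : DenselyOrdered nodeSet where
  dense x y hxy := by
    obtain ⟨z, hz, h₁, h₂⟩ := exists_mem_nodeSet_btwn x.2 y.2 hxy
    exact ⟨⟨z, hz⟩, h₁, h₂⟩

instance : NoMaxOrder nodeSet where
  exists_gt x := ⟨⟨_, intCast_mem_nodeSet (⌊(x : ℚ)⌋ + 1)⟩, by
    show (x : ℚ) < _
    push_cast
    exact Int.lt_floor_add_one _⟩

instance : NoMinOrder nodeSet where
  exists_lt x := ⟨⟨_, intCast_mem_nodeSet (⌈(x : ℚ)⌉ - 1)⟩, by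
    show _ < (x : ℚ)
    push_cast
    linarith [Int.ceil_lt_add_one (x : ℚ)]⟩

instance : Nonempty nodeSet := ⟨⟨0, by exact_mod_cast intCast_mem_nodeSet 0⟩⟩

lemma mem_grid_or_mem_range_node {s : ℚ} (hs : s ∈ nodeSet) (M : ℕ) :
    s ∈ grid M ∨ ∃ c ∈ grid M, s ∈ range (node c M) := by
  rcases hs with ⟨m, rfl⟩ | hs
  · exact Or.inl (intCast_mem_grid m M)
  · obtain ⟨m, r, rfl⟩ := mem_iUnion.1 hs
    exact node_mem_grid_or_mem_range (intCast_mem_grid m 0) M.zero_le r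

lemma exists_pos_le_abs_sub (q : ℚ) :
    ∃ ε > 0, ∀ s ∈ nodeSet, s ≠ q → ε ≤ |s - q| := by
  have hD : (0 : ℚ) < q.den := by exact_mod_cast q.pos
  obtain ⟨N, hN⟩ := exists_weight_lt (inv_pos.2 (by positivity : (0 : ℚ) < 5 * q.den))
  have hsep : ∀ x ∈ grid (N + 1), x ≠ q → 5 * weight (N + 1) ≤ |x - q| := by
    intro x hx hxq
    refine le_trans ?_ (weight_div_den_le_abs_sub hx hxq)
    rw [weight_succ, le_div_iff₀ hD]
    rw [← one_div, lt_div_iff₀ (by positivity)] at hN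
    nlinarith [weight_pos N]
  refine ⟨weight (N + 1), weight_pos _, fun s hs hsq => ?_⟩
  have hw := weight_pos (N + 1)
  rcases mem_grid_or_mem_range_node hs (N + 1) with hs | ⟨c, hc, r, rfl⟩
  · linarith [hsep s hs hsq]
  · obtain ⟨h₁, h₂⟩ := node_mem_Ioo c (N + 1) r
    rcases eq_or_ne c q with rfl | hcq
    · rw [abs_of_pos (by linarith)]
      linarith
    · have := hsep c hc hcq
      have := abs_sub_le c (node c (N + 1) r) q
      rw [abs_sub_comm c (node c (N + 1) r),
        abs_of_pos (show 0 < node c (N + 1) r - c by linarith)] at this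
      linarith

lemma IsGap.exists_straddles_range_node_zero {A B : Set ℚ} (h : IsGap A B)
    (hAB : A ∪ B = nodeSet) :
    ∃ m : ℤ, Straddles A B (range (node m 0)) := by
  have hint : ∀ m : ℤ, (m : ℚ) ∈ A ∪ B := fun m => hAB ▸ intCast_mem_nodeSet m
  obtain ⟨a, ha⟩ := h.nonempty_left
  obtain ⟨b, hb⟩ := h.nonempty_right
  obtain ⟨m, hmA, hmax⟩ := Int.exists_greatest_of_bdd (P := fun m : ℤ => (m : ℚ) ∈ A)
    ⟨⌈b⌉, fun m hm => by exact_mod_cast ((h.lt _ hm b hb).trans_le (Int.le_ceil b)).le⟩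
    ⟨⌊a⌋, (hint ⌊a⌋).resolve_right fun hB => (h.lt a ha _ hB).not_ge (Int.floor_le a)⟩
  have hm₁ : ((m + 1 : ℤ) : ℚ) ∈ B := (hint (m + 1)).resolve_left fun hA => by
    linarith [hmax _ hA]
  push_cast at hm₁
  have hblock : ∀ x ∈ A ∪ B, (m : ℚ) < x → x < m + 1 → x ∈ range (node m 0) :=
    fun x hx h₁ h₂ => mem_range_node_of_mem_Ioo (hAB ▸ hx) ⟨h₁, h₂⟩
  obtain ⟨a', ha'A, hma'⟩ := h.exists_gt _ hmA
  obtain ⟨b', hb'B, hb'm⟩ := h.exists_lt _ hm₁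
  refine ⟨m, hAB ▸ range_node_subset_nodeSet m, fun x hx y hy s ⟨hs, hxs, hsy⟩ => ?_,
    ⟨a', ha'A, hblock a' (Or.inl ha'A) hma' (h.lt a' ha'A _ hm₁)⟩,
    ⟨b', hb'B, hblock b' (Or.inr hb'B) (h.lt _ hmA b' hb'B) hb'm⟩⟩
  obtain ⟨r, rfl⟩ := hx
  obtain ⟨r', rfl⟩ := hy
  exact hblock s hs ((node_zero_mem_Ioo m r).1.trans_le hxs)
    (hsy.trans_lt (node_zero_mem_Ioo m r').2)

lemma IsGap.exists_sub_lt {A B : Set ℚ} (h : IsGap A B) (hAB : A ∪ B = nodeSet) {ε : ℚ}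
    (hε : 0 < ε) : ∃ a ∈ A, ∃ b ∈ B, b - a < ε := by
  have hstraddle : ∀ k, ∃ c, Straddles A B (range (node c k)) := by
    intro k
    induction k with
    | zero =>
      obtain ⟨m, hm⟩ := h.exists_straddles_range_node_zero hAB
      exact ⟨m, hm⟩
    | succ k ih =>
      obtain ⟨c, hc⟩ := ih
      rcases h.straddles_inter_Iio_or_Ioi hc (⟨[], rfl⟩ : c + 2 * weight k ∈ range (node c k))
        with hc | hc
      · exact ⟨_, range_node_inter_Iio c k ▸ hc⟩
      · exact ⟨_, range_node_inter_Ioi c k ▸ hc⟩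
  obtain ⟨k, hk⟩ := exists_weight_lt (by positivity : 0 < ε / 3)
  obtain ⟨c, hc⟩ := hstraddle k
  obtain ⟨_, ha, r, rfl⟩ := hc.inter_left
  obtain ⟨_, hb, r', rfl⟩ := hc.inter_right
  obtain ⟨h₁, -⟩ := node_mem_Ioo c k r
  obtain ⟨-, h₂⟩ := node_mem_Ioo c k r'
  exact ⟨_, ha, _, hb, by linarith⟩

lemma isGap_image (g : ℚ → ℚ) (hg : StrictMono g) (γ : ℝ) :
    IsGap (g '' {p : ℚ | (p : ℝ) < γ}) (g '' {p : ℚ | γ < (p : ℝ)}) where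
  nonempty_left := let ⟨p, hp⟩ := exists_rat_lt γ; ⟨g p, p, hp, rfl⟩
  nonempty_right := let ⟨p, hp⟩ := exists_rat_gt γ; ⟨g p, p, hp, rfl⟩
  lt := by
    rintro _ ⟨p, hp, rfl⟩ _ ⟨p', hp', rfl⟩
    exact hg (by exact_mod_cast (show (p : ℝ) < γ from hp).trans hp')
  exists_gt := by
    rintro _ ⟨p, hp, rfl⟩
    obtain ⟨p', h₁, h₂⟩ := exists_rat_btwn (show (p : ℝ) < γ from hp)
    exact ⟨g p', mem_image_of_mem g h₂, hg (by exact_mod_cast h₁)⟩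
  exists_lt := by
    rintro _ ⟨p, hp, rfl⟩
    obtain ⟨p', h₁, h₂⟩ := exists_rat_btwn (show γ < (p : ℝ) from hp)
    exact ⟨g p', mem_image_of_mem g h₁, hg (by exact_mod_cast h₂)⟩

lemma image_lt_union_image_gt (g : ℚ → ℚ) {γ : ℝ} (hγ : Irrational γ) :
    g '' {p : ℚ | (p : ℝ) < γ} ∪ g '' {p : ℚ | γ < (p : ℝ)} = range g := by
  rw [← image_union, ← image_univ]
  congr 1
  exact eq_univ_of_forall fun p => (hγ.ne_rat p).symm.lt_or_gt

lemma sSup_coe_image_eq_sInf_coe_image {A B : Set ℚ} (hAB : ∀ a ∈ A, ∀ b ∈ B, a ≤ b)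
    (htight : ∀ ε > 0, ∃ a ∈ A, ∃ b ∈ B, b - a < ε) :
    sSup ((fun a : ℚ => ((a : ℝ) : EReal)) '' A) =
      sInf ((fun b : ℚ => ((b : ℝ) : EReal)) '' B) := by
  refine le_antisymm (sSup_le ?_) (not_lt.1 fun hlt => ?_)
  · rintro _ ⟨a, ha, rfl⟩
    exact le_sInf fun _ ⟨b, hb, hb'⟩ =>
      hb' ▸ EReal.coe_le_coe_iff.2 (by exact_mod_cast hAB a ha b hb)
  obtain ⟨x, hx₁, hx₂⟩ := EReal.lt_iff_exists_rat_btwn.1 hlt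
  obtain ⟨y, hy₁, hy₂⟩ := EReal.lt_iff_exists_rat_btwn.1 hx₂
  obtain ⟨a, ha, b, hb, hab⟩ := htight (y - x)
    (sub_pos.2 (by exact_mod_cast EReal.coe_lt_coe_iff.1 hy₁))
  have hax : (a : ℝ) < x :=
    EReal.coe_lt_coe_iff.1 ((le_sSup (mem_image_of_mem _ ha)).trans_lt hx₁)
  have hyb : (y : ℝ) < b :=
    EReal.coe_lt_coe_iff.1 (hy₂.trans_le (sInf_le (mem_image_of_mem _ hb)))
  have : (b - a : ℝ) < y - x := by exact_mod_cast hab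
  linarith

lemma irrational_of_mem_closure {g : ℚ → ℚ} (hg : range g = nodeSet) {γ : ℝ}
    (hγ : γ ∈ closure ((range fun q : ℚ => (g q : ℝ)) \ {γ})) : Irrational γ := by
  rintro ⟨q, rfl⟩
  obtain ⟨ε, hε, hsep⟩ := exists_pos_le_abs_sub q
  obtain ⟨_, ⟨⟨p, rfl⟩, hne⟩, hdist⟩ :=
    Metric.mem_closure_iff.1 hγ ε (by exact_mod_cast hε)
  have hpq : g p ≠ q := fun h => hne (by simp [h])
  have := hsep (g p) (hg ▸ mem_range_self p) hpq
  rw [Rat.dist_cast, dist_comm, Rat.dist_eq] at hdist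
  exact this.not_gt (by exact_mod_cast hdist)

end GenericInjection

open GenericInjection

/-- There exists a generic injection: a strictly increasing `g : ℚ → ℚ` with image
unbounded below and above, having no irrational discontinuity points, and all of
whose image's limit points in `ℝ` are irrational. -/
theorem exists_generic_injection :
    ∃ g : ℚ → ℚ, StrictMono g ∧
      (∀ q : ℚ, ∃ x : ℚ, g x < q) ∧ (∀ q : ℚ, ∃ x : ℚ, q < g x) ∧
      (∀ γ : ℝ, Irrational γ →
        sSup ((fun p : ℚ => ((g p : ℝ) : EReal)) '' {p : ℚ | (p : ℝ) < γ}) =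
        sInf ((fun p : ℚ => ((g p : ℝ) : EReal)) '' {p : ℚ | γ < (p : ℝ)})) ∧
      (∀ γ : ℝ, γ ∈ closure ((Set.range fun q : ℚ => (g q : ℝ)) \ {γ}) →
        Irrational γ) := by
  obtain ⟨e⟩ := Order.iso_of_countable_dense ℚ nodeSet
  have hg : StrictMono fun q => (e q : ℚ) := fun _ _ h => e.strictMono h
  have hrange : range (fun q => (e q : ℚ)) = nodeSet := by
    rw [← Function.comp_def, e.surjective.range_comp, Subtype.range_coe]
  refine ⟨fun q => e q, hg, fun q => ?_, fun q => ?_, fun γ hγ => ?_,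
    fun γ => irrational_of_mem_closure hrange⟩
  · obtain ⟨x, hx⟩ := hrange ▸ intCast_mem_nodeSet (⌊q⌋ - 1)
    exact ⟨x, by rw [hx]; push_cast; linarith [Int.floor_le q]⟩
  · obtain ⟨x, hx⟩ := hrange ▸ intCast_mem_nodeSet (⌈q⌉ + 1)
    exact ⟨x, by rw [hx]; push_cast; linarith [Int.le_ceil q]⟩
  · have hgap := isGap_image _ hg γ
    simpa only [image_image] using sSup_coe_image_eq_sInf_coe_image
      (fun a ha b hb => (hgap.lt a ha b hb).le)
      fun ε hε => hgap.exists_sub_lt ((image_lt_union_image_gt _ hγ).trans hrange) hε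
end

section
/- Let g : ℚ → ℚ be a strictly increasing function that is unbounded below and above, has no irrational discontinuity points, and whose image has only irrational limit points (a generic injection). Then for every y ∈ ℚ, the quantities g^L(y) = sup g⁻¹((-∞,y)) and g^R(y) = inf g⁻¹((y,+∞)) coincide and are rational; consequently, g is left-invertible in the monoid of monotone functions on ℚ: there exists a monotone g† : ℚ → ℚ with g† ∘ g = id. -/
/-!
For `y = g x` both quantities equal `x` by strict monotonicity. Otherwise `g⁻¹(-∞, y)` and
`g⁻¹(y, ∞)` form a Dedekind cut of `ℚ`, both halves nonempty, so they determine a real `γ`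
with `g^L(y) = g^R(y) = γ`. If `γ` were irrational, the two halves would be `(-∞, γ)` and
`(γ, ∞)`, and continuity of `g` at `γ` would make the rational `y` a limit point of the image.
-/

open Set

section RatCut

variable {A B : Set ℚ}

lemma monotone_ratCast_ereal : Monotone fun p : ℚ => ((p : ℝ) : EReal) :=
  fun _ _ h => EReal.coe_le_coe_iff.mpr (Rat.cast_le.mpr h)

lemma sSup_image_ratCast_eq_sInf_of_cut (hcover : ∀ p, p ∈ A ∨ p ∈ B)
    (hlt : ∀ a ∈ A, ∀ b ∈ B, a < b) :
    sSup ((fun p : ℚ => ((p : ℝ) : EReal)) '' A) =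
      sInf ((fun p : ℚ => ((p : ℝ) : EReal)) '' B) := by
  refine le_antisymm ?_ (not_lt.mp fun hgap => ?_)
  · refine sSup_le ?_
    rintro _ ⟨a, ha, rfl⟩
    refine le_sInf ?_
    rintro _ ⟨b, hb, rfl⟩
    exact monotone_ratCast_ereal (hlt a ha b hb).le
  · obtain ⟨q, hAq, hqB⟩ := EReal.exists_rat_btwn_of_lt hgap
    rcases hcover q with hq | hq
    · exact hAq.not_ge (le_sSup ⟨q, hq, rfl⟩)
    · exact hqB.not_ge (sInf_le ⟨q, hq, rfl⟩)

lemma exists_real_eq_sSup_image_ratCast_of_cut (hcover : ∀ p, p ∈ A ∨ p ∈ B)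
    (hlt : ∀ a ∈ A, ∀ b ∈ B, a < b) (hA : A.Nonempty) (hB : B.Nonempty) :
    ∃ γ : ℝ, sSup ((fun p : ℚ => ((p : ℝ) : EReal)) '' A) = γ ∧
      sInf ((fun p : ℚ => ((p : ℝ) : EReal)) '' B) = γ := by
  have hcut := sSup_image_ratCast_eq_sInf_of_cut hcover hlt
  rw [← hcut]
  obtain ⟨a, ha⟩ := hA
  obtain ⟨b, hb⟩ := hB
  set c := sSup ((fun p : ℚ => ((p : ℝ) : EReal)) '' A)
  have hc_ne_bot : c ≠ ⊥ := ne_bot_of_le_ne_bot (EReal.coe_ne_bot _) (le_sSup ⟨a, ha, rfl⟩)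
  have hc_ne_top : c ≠ ⊤ :=
    ne_top_of_le_ne_top (EReal.coe_ne_top (b : ℝ)) (hcut.trans_le (sInf_le ⟨b, hb, rfl⟩))
  exact ⟨c.toReal, (EReal.coe_toReal hc_ne_top hc_ne_bot).symm,
    (EReal.coe_toReal hc_ne_top hc_ne_bot).symm⟩

lemma cut_eq_of_sSup_image_ratCast_irrational (hcover : ∀ p, p ∈ A ∨ p ∈ B)
    (hlt : ∀ a ∈ A, ∀ b ∈ B, a < b) {γ : ℝ} (hγ : Irrational γ)
    (hsup : sSup ((fun p : ℚ => ((p : ℝ) : EReal)) '' A) = γ) :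
    A = {p : ℚ | (p : ℝ) < γ} ∧ B = {p : ℚ | γ < (p : ℝ)} := by
  have hinf := (sSup_image_ratCast_eq_sInf_of_cut hcover hlt).symm.trans hsup
  have hA : ∀ p ∈ A, (p : ℝ) < γ := fun p hp =>
    (EReal.coe_le_coe_iff.mp (hsup ▸ le_sSup ⟨p, hp, rfl⟩)).lt_of_ne (hγ.ne_rat p).symm
  have hB : ∀ p ∈ B, γ < (p : ℝ) := fun p hp =>
    (EReal.coe_le_coe_iff.mp (hinf ▸ sInf_le ⟨p, hp, rfl⟩)).lt_of_ne (hγ.ne_rat p)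
  constructor <;> ext p <;> refine ⟨fun hp => ?_, fun hp => ?_⟩
  · exact hA p hp
  · exact (hcover p).resolve_right fun hpB => (hB p hpB).not_gt hp
  · exact hB p hp
  · exact (hcover p).resolve_left fun hpA => (hA p hpA).not_gt hp

lemma sSup_image_ratCast_Iio (x : ℚ) :
    sSup ((fun p : ℚ => ((p : ℝ) : EReal)) '' Iio x) = ((x : ℝ) : EReal) := by
  rw [sSup_image_ratCast_eq_sInf_of_cut (A := Iio x) (B := Ici x) (fun p => lt_or_ge p x)
    fun _ ha _ hb => lt_of_lt_of_le ha hb]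
  exact (monotone_ratCast_ereal.map_isLeast (isLeast_Ici (a := x))).isGLB.sInf_eq

lemma sInf_image_ratCast_Ioi (x : ℚ) :
    sInf ((fun p : ℚ => ((p : ℝ) : EReal)) '' Ioi x) = ((x : ℝ) : EReal) := by
  rw [← sSup_image_ratCast_eq_sInf_of_cut (A := Iic x) (B := Ioi x) (fun p => le_or_gt p x)
    fun _ ha _ hb => lt_of_le_of_lt ha hb]
  exact (monotone_ratCast_ereal.map_isGreatest (isGreatest_Iic (a := x))).isLUB.sSup_eq

end RatCut

lemma mem_closure_image_of_sSup_image_coe_eq {α : Type*} {f : α → ℝ} {S : Set α} {y : ℝ}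
    (h : sSup ((fun a => (f a : EReal)) '' S) = y) : y ∈ closure (f '' S) := by
  rw [EReal.isEmbedding_coe.closure_eq_preimage_closure_image, image_image, mem_preimage]
  refine h ▸ (isLUB_sSup _).mem_closure ?_
  by_contra hempty
  rw [not_nonempty_iff_eq_empty.mp hempty, sSup_empty] at h
  exact EReal.coe_ne_bot y h.symm

lemma exists_rat_sSup_eq_sInf_of_notMem_range {g : ℚ → ℚ} (hg : Monotone g) {y : ℚ}
    (hy : y ∉ range g) (hlow : ∃ x, g x < y) (hup : ∃ x, y < g x)
    (hcont : ∀ γ : ℝ, Irrational γ →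
      sSup ((fun p : ℚ => ((g p : ℝ) : EReal)) '' {p : ℚ | (p : ℝ) < γ}) =
      sInf ((fun p : ℚ => ((g p : ℝ) : EReal)) '' {p : ℚ | γ < (p : ℝ)}))
    (hlim : (y : ℝ) ∉ closure ((range fun q : ℚ => (g q : ℝ)) \ {(y : ℝ)})) :
    ∃ x : ℚ,
      sSup ((fun p : ℚ => ((p : ℝ) : EReal)) '' {p : ℚ | g p < y}) = ((x : ℝ) : EReal) ∧
      sInf ((fun p : ℚ => ((p : ℝ) : EReal)) '' {p : ℚ | y < g p}) = ((x : ℝ) : EReal) := by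
  set A := {p : ℚ | g p < y}
  set B := {p : ℚ | y < g p}
  have hcover : ∀ p, p ∈ A ∨ p ∈ B := fun p =>
    lt_or_gt_of_ne fun h => hy ⟨p, h⟩
  have hlt : ∀ a ∈ A, ∀ b ∈ B, a < b := fun a ha b hb => hg.reflect_lt (ha.trans hb)
  obtain ⟨γ, hsup, hinf⟩ := exists_real_eq_sSup_image_ratCast_of_cut hcover hlt hlow hup
  by_cases hγ : Irrational γ
  · obtain ⟨hA, hB⟩ := cut_eq_of_sSup_image_ratCast_irrational hcover hlt hγ hsup
    have hgap := hcont γ hγ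
    rw [← hA, ← hB] at hgap
    have hsup_le : sSup ((fun p : ℚ => ((g p : ℝ) : EReal)) '' A) ≤ ((y : ℝ) : EReal) :=
      sSup_le fun _ ⟨p, hp, hpz⟩ => hpz ▸ monotone_ratCast_ereal hp.le
    have hle_inf : ((y : ℝ) : EReal) ≤ sInf ((fun p : ℚ => ((g p : ℝ) : EReal)) '' B) :=
      le_sInf fun _ ⟨p, hp, hpz⟩ => hpz ▸ monotone_ratCast_ereal hp.le
    have hy_mem := mem_closure_image_of_sSup_image_coe_eq
      (hsup_le.antisymm (hgap ▸ hle_inf))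
    refine absurd (closure_mono ?_ hy_mem) hlim
    rintro _ ⟨p, hp, rfl⟩
    exact ⟨⟨p, rfl⟩, (Rat.cast_lt.mpr hp).ne⟩
  · obtain ⟨x, rfl⟩ := not_not.mp hγ
    exact ⟨x, hsup, hinf⟩

lemma sSup_image_ratCast_preimage_Iio_apply {g : ℚ → ℚ} (hg : StrictMono g) (x : ℚ) :
    sSup ((fun p : ℚ => ((p : ℝ) : EReal)) '' {p : ℚ | g p < g x}) = ((x : ℝ) : EReal) := by
  simp_rw [hg.lt_iff_lt]
  exact sSup_image_ratCast_Iio x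

lemma sInf_image_ratCast_preimage_Ioi_apply {g : ℚ → ℚ} (hg : StrictMono g) (x : ℚ) :
    sInf ((fun p : ℚ => ((p : ℝ) : EReal)) '' {p : ℚ | g x < g p}) = ((x : ℝ) : EReal) := by
  simp_rw [hg.lt_iff_lt]
  exact sInf_image_ratCast_Ioi x

/-- For a generic injection `g : ℚ → ℚ` (strictly increasing, unbounded both
sides, no irrational discontinuity points, image with only irrational limit
points), the quantities `g^L(y) = sup g⁻¹((-∞,y))` and `g^R(y) = inf g⁻¹((y,+∞))`
coincide and are rational for every `y : ℚ`; consequently `g` is left-invertible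
in the monoid of monotone functions on `ℚ`. -/
theorem generic_injection_left_invertible (g : ℚ → ℚ) (hsm : StrictMono g)
    (hub : ∀ q : ℚ, ∃ x : ℚ, g x < q) (hua : ∀ q : ℚ, ∃ x : ℚ, q < g x)
    (hcont : ∀ γ : ℝ, Irrational γ →
      sSup ((fun p : ℚ => ((g p : ℝ) : EReal)) '' {p : ℚ | (p : ℝ) < γ}) =
      sInf ((fun p : ℚ => ((g p : ℝ) : EReal)) '' {p : ℚ | γ < (p : ℝ)}))
    (hLP : ∀ γ : ℝ, γ ∈ closure ((Set.range fun q : ℚ => (g q : ℝ)) \ {γ}) →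
      Irrational γ) :
    (∀ y : ℚ, ∃ x : ℚ,
      sSup ((fun p : ℚ => ((p : ℝ) : EReal)) '' {p : ℚ | g p < y}) =
        ((x : ℝ) : EReal) ∧
      sInf ((fun p : ℚ => ((p : ℝ) : EReal)) '' {p : ℚ | y < g p}) =
        ((x : ℝ) : EReal)) ∧
    (∃ d : ℚ → ℚ, Monotone d ∧ ∀ x : ℚ, d (g x) = x) := by
  have hinv : ∀ y : ℚ, ∃ x : ℚ,
      sSup ((fun p : ℚ => ((p : ℝ) : EReal)) '' {p : ℚ | g p < y}) = ((x : ℝ) : EReal) ∧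
      sInf ((fun p : ℚ => ((p : ℝ) : EReal)) '' {p : ℚ | y < g p}) = ((x : ℝ) : EReal) := by
    intro y
    by_cases hy : y ∈ range g
    · obtain ⟨x, rfl⟩ := hy
      exact ⟨x, sSup_image_ratCast_preimage_Iio_apply hsm x,
        sInf_image_ratCast_preimage_Ioi_apply hsm x⟩
    · exact exists_rat_sSup_eq_sInf_of_notMem_range hsm.monotone hy (hub y) (hua y) hcont
        fun hmem => Rat.not_irrational y (hLP y hmem)
  refine ⟨hinv, ?_⟩
  choose d hd using hinv
  refine ⟨d, fun y y' hyy' => ?_, fun x => ?_⟩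
  · have hle : ((d y : ℝ) : EReal) ≤ ((d y' : ℝ) : EReal) := by
      rw [← (hd y).1, ← (hd y').1]
      exact sSup_le_sSup (image_mono fun p hp => lt_of_lt_of_le hp hyy')
    exact_mod_cast hle
  · exact_mod_cast (hd (g x)).1.symm.trans (sSup_image_ratCast_preimage_Iio_apply hsm x)
end

section
/- Let g : ℚ → ℚ be a generic injection and let J ⊆ ℚ be an interval whose endpoints q₁ ≤ q₂ lie in ℚ ∪ {±∞}. Then the preimage g⁻¹(J) is again an interval of ℚ whose endpoints are g†(q₁) and g†(q₂) (which are rational when q₁, q₂ are). -/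
/-!
Every point of `g ⁻¹' J` lies above each `p` with `g p < q₁`, so `d q₁` is a lower bound of
`g ⁻¹' J`. Conversely, if `q₁ < g p` then some element of `J` lies below `g p`, and convexity of
`J` forces either `g p ∈ J` or `g x₀ < g p` for a fixed `x₀ ∈ g ⁻¹' J`; either way `g ⁻¹' J`
has a point at or below `p`, so every lower bound of `g ⁻¹' J` is one of `{p | q₁ < g p}`, whose
infimum is `d q₁`. The upper endpoint is dual. The `EReal` infima and suprema of the statement
are greatest lower and least upper bounds in `ℚ`, since `ℚ` is dense in `EReal`.
-/

open Set

namespace Rat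

theorem coe_ereal_le_coe_ereal {a b : ℚ} :
    ((a : ℝ) : EReal) ≤ ((b : ℝ) : EReal) ↔ a ≤ b :=
  EReal.coe_le_coe_iff.trans Rat.cast_le

theorem isGLB_iff_sInf_image_coe_ereal {s : Set ℚ} {x : ℚ} :
    IsGLB s x ↔ sInf ((fun p : ℚ => ((p : ℝ) : EReal)) '' s) = ((x : ℝ) : EReal) := by
  refine ⟨fun hx => ?_, fun h => IsGLB.of_image coe_ereal_le_coe_ereal (h ▸ isGLB_sInf _)⟩
  refine le_antisymm (not_lt.1 fun hlt => ?_) (le_sInf ?_)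
  · obtain ⟨r, hxr, hrs⟩ := EReal.exists_rat_btwn_of_lt hlt
    have hr : r ∈ lowerBounds s := fun y hy =>
      coe_ereal_le_coe_ereal.1 (hrs.le.trans (sInf_le (mem_image_of_mem _ hy)))
    exact (coe_ereal_le_coe_ereal.2 (hx.2 hr)).not_gt hxr
  · rintro _ ⟨y, hy, rfl⟩
    exact coe_ereal_le_coe_ereal.2 (hx.1 hy)

theorem isLUB_iff_sSup_image_coe_ereal {s : Set ℚ} {x : ℚ} :
    IsLUB s x ↔ sSup ((fun p : ℚ => ((p : ℝ) : EReal)) '' s) = ((x : ℝ) : EReal) := by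
  refine ⟨fun hx => ?_, fun h => IsLUB.of_image coe_ereal_le_coe_ereal (h ▸ isLUB_sSup _)⟩
  refine le_antisymm (sSup_le ?_) (not_lt.1 fun hlt => ?_)
  · rintro _ ⟨y, hy, rfl⟩
    exact coe_ereal_le_coe_ereal.2 (hx.1 hy)
  · obtain ⟨r, hsr, hrx⟩ := EReal.exists_rat_btwn_of_lt hlt
    have hr : r ∈ upperBounds s := fun y hy =>
      coe_ereal_le_coe_ereal.1 ((le_sSup (mem_image_of_mem _ hy)).trans hsr.le)
    exact (coe_ereal_le_coe_ereal.2 (hx.2 hr)).not_gt hrx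

end Rat

section Preimage

variable {α β : Type*} [LinearOrder α] [LinearOrder β] {g : α → β} {J : Set β}

theorem Set.OrdConnected.exists_mem_preimage_le (hg : Monotone g) (hJ : J.OrdConnected)
    {x₀ p : α} (hx₀ : g x₀ ∈ J) {c : β} (hc : c ∈ J) (hcp : c ≤ g p) :
    ∃ x ∈ g ⁻¹' J, x ≤ p := by
  by_cases hp : g p ∈ J
  · exact ⟨p, hp, le_rfl⟩
  · have hlt : g x₀ < g p := not_le.1 fun hle => hp (hJ.out hc hx₀ ⟨hcp, hle⟩)
    exact ⟨x₀, hx₀, (hg.reflect_lt hlt).le⟩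

theorem Set.OrdConnected.isGLB_preimage (hg : Monotone g) (hJ : J.OrdConnected)
    (hne : (g ⁻¹' J).Nonempty) {q : β} (hq : IsGLB J q) {c : α}
    (hbelow : IsLUB {p | g p < q} c) (habove : IsGLB {p | q < g p} c) :
    IsGLB (g ⁻¹' J) c := by
  obtain ⟨x₀, hx₀⟩ := hne
  refine ⟨fun x hx => hbelow.2 fun p hp => (hg.reflect_lt (hp.trans_le (hq.1 hx))).le,
    fun b hb => habove.2 fun p hp => ?_⟩
  obtain ⟨c', hc', hc'p⟩ := hq.exists_between hp
  obtain ⟨x, hx, hxp⟩ := hJ.exists_mem_preimage_le hg hx₀ hc' hc'p.2.le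
  exact (hb hx).trans hxp

theorem Set.OrdConnected.isLUB_preimage (hg : Monotone g) (hJ : J.OrdConnected)
    (hne : (g ⁻¹' J).Nonempty) {q : β} (hq : IsLUB J q) {c : α}
    (hbelow : IsLUB {p | g p < q} c) (habove : IsGLB {p | q < g p} c) :
    IsLUB (g ⁻¹' J) c :=
  Set.OrdConnected.isGLB_preimage (α := αᵒᵈ) (β := βᵒᵈ) hg.dual hJ.dual hne hq habove hbelow

end Preimage

theorem generic_injection_preimage_interval_general (g : ℚ → ℚ) (hsm : StrictMono g)
    (d : ℚ → ℚ)
    (hd : ∀ y : ℚ,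
      sSup ((fun p : ℚ => ((p : ℝ) : EReal)) '' {p : ℚ | g p < y}) =
        ((d y : ℝ) : EReal) ∧
      sInf ((fun p : ℚ => ((p : ℝ) : EReal)) '' {p : ℚ | y < g p}) =
        ((d y : ℝ) : EReal))
    (J : Set ℚ) (hJ : J.OrdConnected) (q₁ q₂ : ℚ)
    (hinfJ : sInf ((fun p : ℚ => ((p : ℝ) : EReal)) '' J) = ((q₁ : ℝ) : EReal))
    (hsupJ : sSup ((fun p : ℚ => ((p : ℝ) : EReal)) '' J) = ((q₂ : ℝ) : EReal)) :
    (g ⁻¹' J).OrdConnected ∧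
    ((g ⁻¹' J).Nonempty →
      sInf ((fun p : ℚ => ((p : ℝ) : EReal)) '' (g ⁻¹' J)) = ((d q₁ : ℝ) : EReal) ∧
      sSup ((fun p : ℚ => ((p : ℝ) : EReal)) '' (g ⁻¹' J)) = ((d q₂ : ℝ) : EReal)) := by
  have hbelow : ∀ y, IsLUB {p | g p < y} (d y) := fun y =>
    Rat.isLUB_iff_sSup_image_coe_ereal.2 (hd y).1
  have habove : ∀ y, IsGLB {p | y < g p} (d y) := fun y =>
    Rat.isGLB_iff_sInf_image_coe_ereal.2 (hd y).2
  refine ⟨hJ.preimage_mono hsm.monotone, fun hne => ⟨?_, ?_⟩⟩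
  · exact Rat.isGLB_iff_sInf_image_coe_ereal.1 <| hJ.isGLB_preimage hsm.monotone hne
      (Rat.isGLB_iff_sInf_image_coe_ereal.2 hinfJ) (hbelow q₁) (habove q₁)
  · exact Rat.isLUB_iff_sSup_image_coe_ereal.1 <| hJ.isLUB_preimage hsm.monotone hne
      (Rat.isLUB_iff_sSup_image_coe_ereal.2 hsupJ) (hbelow q₂) (habove q₂)

/-- Let `g : ℚ → ℚ` be a generic injection with generalized inverse `d` (so `d y`
is the common value of `sup g⁻¹((-∞,y))` and `inf g⁻¹((y,+∞))`), and let `J ⊆ ℚ`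
be an interval (order-connected set) with endpoints `q₁ ≤ q₂` in `ℚ`.  Then
`g ⁻¹' J` is again an interval of `ℚ`, and (when nonempty) its endpoints are
`d q₁` and `d q₂`. -/
theorem generic_injection_preimage_interval (g : ℚ → ℚ) (hsm : StrictMono g)
    (hub : ∀ q : ℚ, ∃ x : ℚ, g x < q) (hua : ∀ q : ℚ, ∃ x : ℚ, q < g x)
    (hcont : ∀ γ : ℝ, Irrational γ →
      sSup ((fun p : ℚ => ((g p : ℝ) : EReal)) '' {p : ℚ | (p : ℝ) < γ}) =
      sInf ((fun p : ℚ => ((g p : ℝ) : EReal)) '' {p : ℚ | γ < (p : ℝ)}))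
    (hLP : ∀ γ : ℝ, γ ∈ closure ((Set.range fun q : ℚ => (g q : ℝ)) \ {γ}) →
      Irrational γ)
    (d : ℚ → ℚ)
    (hd : ∀ y : ℚ,
      sSup ((fun p : ℚ => ((p : ℝ) : EReal)) '' {p : ℚ | g p < y}) =
        ((d y : ℝ) : EReal) ∧
      sInf ((fun p : ℚ => ((p : ℝ) : EReal)) '' {p : ℚ | y < g p}) =
        ((d y : ℝ) : EReal))
    (J : Set ℚ) (hJ : J.OrdConnected) (q₁ q₂ : ℚ) (hq : q₁ ≤ q₂)
    (hinfJ : sInf ((fun p : ℚ => ((p : ℝ) : EReal)) '' J) = ((q₁ : ℝ) : EReal))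
    (hsupJ : sSup ((fun p : ℚ => ((p : ℝ) : EReal)) '' J) = ((q₂ : ℝ) : EReal)) :
    (g ⁻¹' J).OrdConnected ∧
    ((g ⁻¹' J).Nonempty →
      sInf ((fun p : ℚ => ((p : ℝ) : EReal)) '' (g ⁻¹' J)) = ((d q₁ : ℝ) : EReal) ∧
      sSup ((fun p : ℚ => ((p : ℝ) : EReal)) '' (g ⁻¹' J)) = ((d q₂ : ℝ) : EReal)) :=
  generic_injection_preimage_interval_general g hsm d hd J hJ q₁ q₂ hinfJ hsupJ
end

section
/- Let s, f : ℚ → ℚ be monotone with Img(s) ⊆ Img(f). Then every finite partial monotone map m₀ from ℚ to ℚ satisfying s(p) = f(m₀(p)) for all p in its domain extends to a total monotone map s' : ℚ → ℚ with s = f ∘ s'. -/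
/-!
Put `s' p := m₀ d`, where `d` is the largest point of `D` below `p` in the same fibre of `s` as `p`
(the smallest point of that fibre in `D` if there is none, and an arbitrary `f`-preimage of `s p`
if the fibre misses `D`). Then `f ∘ s' = s`, and `s'` is monotone: inside a fibre of `s` this is the
monotonicity of `m₀`, and across fibres `s p < s q` forces `s' p < s' q` because `f` is monotone.
-/

open Function

namespace Finset

variable {α β : Type*} [LinearOrder α]

noncomputable def extendFromBelow (D : Finset α) (m : α → β) (b : β) (p : α) : β :=
  if h : (D.filter (· ≤ p)).Nonempty then m ((D.filter (· ≤ p)).max' h)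
  else if hD : D.Nonempty then m (D.min' hD) else b

theorem max'_filter_le_mem {D : Finset α} {p : α} (h : (D.filter (· ≤ p)).Nonempty) :
    (D.filter (· ≤ p)).max' h ∈ D ∧ (D.filter (· ≤ p)).max' h ≤ p :=
  mem_filter.mp (max'_mem _ h)

theorem extendFromBelow_of_mem {D : Finset α} (m : α → β) (b : β) {p : α} (hp : p ∈ D) :
    extendFromBelow D m b p = m p := by
  have hpL : p ∈ D.filter (· ≤ p) := mem_filter.mpr ⟨hp, le_rfl⟩
  have hmax : (D.filter (· ≤ p)).max' ⟨p, hpL⟩ = p :=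
    le_antisymm (max'_filter_le_mem _).2 (le_max' _ _ hpL)
  rw [extendFromBelow, dif_pos ⟨p, hpL⟩, hmax]

theorem extendFromBelow_mem (D : Finset α) (m : α → β) (b : β) (p : α) :
    extendFromBelow D m b p ∈ insert b (m '' D) := by
  unfold extendFromBelow
  split_ifs with h hD
  · exact Or.inr ⟨_, (max'_filter_le_mem h).1, rfl⟩
  · exact Or.inr ⟨_, min'_mem D hD, rfl⟩
  · exact Or.inl rfl

theorem monotone_extendFromBelow [Preorder β] {D : Finset α} {m : α → β} (hm : MonotoneOn m D)
    (b : β) : Monotone (extendFromBelow D m b) := by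
  intro p q hpq
  have hsub : D.filter (· ≤ p) ⊆ D.filter (· ≤ q) := fun x hx =>
    mem_filter.mpr ⟨(mem_filter.mp hx).1, (mem_filter.mp hx).2.trans hpq⟩
  by_cases hq : (D.filter (· ≤ q)).Nonempty
  · have hq_le : m (D.min' (hq.mono (filter_subset _ D))) ≤ extendFromBelow D m b q := by
      rw [extendFromBelow, dif_pos hq]
      exact hm (min'_mem D _) (max'_filter_le_mem hq).1 (min'_le D _ (max'_filter_le_mem hq).1)
    by_cases hp : (D.filter (· ≤ p)).Nonempty
    · rw [extendFromBelow, extendFromBelow, dif_pos hp, dif_pos hq]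
      exact hm (max'_filter_le_mem hp).1 (max'_filter_le_mem hq).1 (max'_subset hp hsub)
    · rwa [extendFromBelow, dif_neg hp, dif_pos (hq.mono (filter_subset _ D))]
  · have hp : ¬(D.filter (· ≤ p)).Nonempty := fun hp => hq (hp.mono hsub)
    rw [extendFromBelow, extendFromBelow, dif_neg hp, dif_neg hq]

end Finset

theorem Monotone.of_comp_eq_of_fiberwise {α β γ : Type*} [Preorder α] [LinearOrder β]
    [PartialOrder γ] {s : α → γ} {f : β → γ} {s' : α → β} (hs : Monotone s) (hf : Monotone f)
    (hcomp : ∀ p, f (s' p) = s p) (hfiber : ∀ p q, p ≤ q → s p = s q → s' p ≤ s' q) :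
    Monotone s' := by
  intro p q hpq
  rcases (hs hpq).lt_or_eq with hlt | heq
  · by_contra! hqp
    have := hf hqp.le
    rw [hcomp, hcomp] at this
    exact this.not_gt hlt
  · exact hfiber p q hpq heq

/-- If `s, f : ℚ → ℚ` are monotone with `range s ⊆ range f`, then every finite
partial monotone map `m₀` (defined on a finite set `D`) satisfying
`s p = f (m₀ p)` on `D` extends to a total monotone `s' : ℚ → ℚ` with
`s = f ∘ s'`. -/
theorem extend_partial_solution_monotone (s f : ℚ → ℚ) (hs : Monotone s)
    (hf : Monotone f) (him : Set.range s ⊆ Set.range f)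
    (D : Finset ℚ) (m₀ : ℚ → ℚ)
    (hm₀ : ∀ p ∈ D, ∀ q ∈ D, p ≤ q → m₀ p ≤ m₀ q)
    (hcomp : ∀ p ∈ D, s p = f (m₀ p)) :
    ∃ s' : ℚ → ℚ, Monotone s' ∧ (∀ p ∈ D, s' p = m₀ p) ∧ s = f ∘ s' := by
  classical
  let fiber : ℚ → Finset ℚ := fun v => D.filter (s · = v)
  let s' : ℚ → ℚ := fun p => (fiber (s p)).extendFromBelow m₀ (invFun f (s p)) p
  have hm₀_fiber : ∀ v, MonotoneOn m₀ (fiber v) := fun v p hp q hq =>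
    hm₀ p (Finset.mem_filter.mp hp).1 q (Finset.mem_filter.mp hq).1
  have hs' : ∀ p, f (s' p) = s p := by
    intro p
    rcases Finset.extendFromBelow_mem (fiber (s p)) m₀ (invFun f (s p)) p with h | ⟨d, hd, h⟩
    · rw [show s' p = _ from h, invFun_eq (him ⟨p, rfl⟩)]
    · obtain ⟨hdD, hds⟩ := Finset.mem_filter.mp hd
      rw [show s' p = _ from h.symm, ← hcomp d hdD, hds]
  refine ⟨s', hs.of_comp_eq_of_fiberwise hf hs' fun p q hpq hpq' => ?_, fun p hp => ?_,
    funext fun p => (hs' p).symm⟩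
  · simp only [s', hpq']
    exact Finset.monotone_extendFromBelow (hm₀_fiber _) _ hpq
  · exact Finset.extendFromBelow_of_mem _ _ (Finset.mem_filter.mpr ⟨hp, rfl⟩)
end

section
/- Let s, f : ℚ → ℚ be monotone with Img(s) ⊆ Img(f), and suppose that for each w ∈ Img(f) the preimage f⁻¹({w}) is an interval of ℚ with irrational endpoints. Then every finite partial strictly monotone map m₀ satisfying s(p) = f(m₀(p)) for all p in its domain extends to a strictly monotone (injective monotone) s' : ℚ → ℚ with s = f ∘ s'. -/
/-!
Every fibre `f⁻¹{w}` is an interval of `ℚ` without endpoints, hence a countable dense linear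
order without endpoints, so the back-and-forth argument extends any finite order-preserving
partial map into it to an order embedding of `ℚ`. Choosing such an embedding `h_w` for every
`w ∈ range s`, extending `m₀` on `D ∩ s⁻¹{w}`, the map `q ↦ h_{s q} q` is strictly monotone
inside each fibre of `s`, and across fibres because `f` is monotone and `f (h_w q) = w`.
-/

open Set

namespace Order

variable {α β : Type*} [LinearOrder α] [LinearOrder β]

def PartialIso.ofOrderEmbedding (E : Finset α) (v : E ↪o β) : PartialIso α β :=
  ⟨E.attach.image fun x => (x.1, v x), by
    simp only [Finset.mem_image, Finset.mem_attach, true_and]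
    rintro _ ⟨x, rfl⟩ _ ⟨y, rfl⟩
    exact (v.strictMono.cmp_map_eq x y).symm⟩

theorem exists_orderEmbedding_extend [Countable α] [DenselyOrdered β] [NoMinOrder β]
    [NoMaxOrder β] [Nonempty β] (E : Finset α) (v : E ↪o β) :
    ∃ g : α ↪o β, ∀ x : E, g x = v x := by
  cases nonempty_encodable α
  -- The back-and-forth ideal of `embedding_from_countable_to_dense`, started at the graph of `v`.
  let I := idealOfCofinals (PartialIso.ofOrderEmbedding E v) (PartialIso.definedAtLeft β)
  let F a := PartialIso.funOfIdeal a I (cofinal_meets_idealOfCofinals _ _ a)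
  have compat : ∀ f ∈ I, ∀ g ∈ I, ∀ p ∈ f.val, ∀ q ∈ g.val, cmp p.1 q.1 = cmp p.2 q.2 := by
    intro f hf g hg p hp q hq
    obtain ⟨m, -, hfm, hgm⟩ := I.directed _ hf _ hg
    exact m.prop p (hfm hp) q (hgm hq)
  refine ⟨OrderEmbedding.ofStrictMono (fun a => (F a).val) fun a₁ a₂ h => ?_, fun x => ?_⟩
  · obtain ⟨f, hf, ha₁⟩ := (F a₁).prop
    obtain ⟨g, hg, ha₂⟩ := (F a₂).prop
    exact (lt_iff_lt_of_cmp_eq_cmp (compat f hf g hg _ ha₁ _ ha₂)).mp h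
  · obtain ⟨f, hf, hx⟩ := (F x).prop
    have hcmp := compat f hf _ (mem_idealOfCofinals _ _) _ hx (x.1, v x)
      (Finset.mem_image_of_mem _ (Finset.mem_attach _ x))
    rwa [cmp_self_eq_eq, eq_comm, cmp_eq_eq_iff] at hcmp

end Order

theorem Monotone.strictMono_of_fiberwise {α β γ : Type*} [Preorder α] [PartialOrder β]
    [LinearOrder γ] {s : α → β} {f : γ → β} {H : β → α → γ} (hs : Monotone s)
    (hf : Monotone f) (hH : ∀ q, StrictMono (H (s q))) (hfH : ∀ q, f (H (s q) q) = s q) :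
    StrictMono fun q => H (s q) q := by
  intro p q hpq
  rcases (hs hpq.le).lt_or_eq with hlt | heq
  · by_contra! hle
    have hle' := hf hle
    rw [hfH, hfH] at hle'
    exact lt_irrefl _ (hlt.trans_le hle')
  · dsimp only
    rw [← heq]
    exact hH p hpq

theorem exists_strictMono_extend_into_ereal_Ioo {α : Type*} [LinearOrder α] [Countable α]
    {r t : EReal} (hrt : r < t) (E : Finset α) (v : α → ℚ) (hv : StrictMonoOn v E)
    (hvE : ∀ p ∈ E, ((v p : ℝ) : EReal) ∈ Ioo r t) :
    ∃ h : α → ℚ, StrictMono h ∧ (∀ q, ((h q : ℝ) : EReal) ∈ Ioo r t) ∧ ∀ p ∈ E, h p = v p := by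
  let J : Set ℚ := {q | r < ((q : ℝ) : EReal) ∧ ((q : ℝ) : EReal) < t}
  have : OrdConnected J :=
    ordConnected_Ioo.preimage_mono fun a b hab => by exact_mod_cast hab
  have : NoMaxOrder J := ⟨fun x => by
    obtain ⟨y, hxy, hyt⟩ := EReal.exists_rat_btwn_of_lt x.2.2
    exact ⟨⟨y, x.2.1.trans hxy, hyt⟩, Subtype.mk_lt_mk.2 (by exact_mod_cast hxy)⟩⟩
  have : NoMinOrder J := ⟨fun x => by
    obtain ⟨y, hry, hyx⟩ := EReal.exists_rat_btwn_of_lt x.2.1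
    exact ⟨⟨y, hry, hyx.trans x.2.2⟩, Subtype.mk_lt_mk.2 (by exact_mod_cast hyx)⟩⟩
  have : Nonempty J := by
    obtain ⟨y, hry, hyt⟩ := EReal.exists_rat_btwn_of_lt hrt
    exact ⟨⟨y, hry, hyt⟩⟩
  obtain ⟨g, hg⟩ := Order.exists_orderEmbedding_extend E
    (OrderEmbedding.ofStrictMono (fun p => (⟨v p, hvE p p.2⟩ : ↥J)) fun p q hpq => hv p.2 q.2 hpq)
  exact ⟨fun q => g q, (Subtype.strictMono_coe _).comp g.strictMono, fun q => (g q).2,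
    fun p hp => congrArg Subtype.val (hg ⟨p, hp⟩)⟩

/-- If `s, f : ℚ → ℚ` are monotone with `range s ⊆ range f` and every fibre of `f`
over its range is an interval of `ℚ` with irrational (or infinite) endpoints,
then every finite partial strictly monotone map `m₀` satisfying `s p = f (m₀ p)`
on its domain extends to a strictly monotone `s' : ℚ → ℚ` with `s = f ∘ s'`. -/
theorem extend_partial_solution_strictMono (s f : ℚ → ℚ) (hs : Monotone s)
    (hf : Monotone f) (him : Set.range s ⊆ Set.range f)
    (hfib : ∀ w ∈ Set.range f, ∃ r t : EReal,
      (r = ⊥ ∨ ∃ ρ : ℝ, Irrational ρ ∧ r = (ρ : EReal)) ∧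
      (t = ⊤ ∨ ∃ τ : ℝ, Irrational τ ∧ t = (τ : EReal)) ∧
      (∀ q : ℚ, f q = w ↔ (r < ((q : ℝ) : EReal) ∧ ((q : ℝ) : EReal) < t)))
    (D : Finset ℚ) (m₀ : ℚ → ℚ)
    (hm₀ : ∀ p ∈ D, ∀ q ∈ D, p < q → m₀ p < m₀ q)
    (hcomp : ∀ p ∈ D, s p = f (m₀ p)) :
    ∃ s' : ℚ → ℚ, StrictMono s' ∧ (∀ p ∈ D, s' p = m₀ p) ∧ s = f ∘ s' := by
  have fiber : ∀ w ∈ Set.range s, ∃ h : ℚ → ℚ,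
      StrictMono h ∧ (∀ q, f (h q) = w) ∧ ∀ p ∈ D, s p = w → h p = m₀ p := by
    intro w hw
    obtain ⟨r, t, -, -, hrt⟩ := hfib w (him hw)
    obtain ⟨q, hq⟩ := him hw
    have hlt : r < t := ((hrt q).1 hq).1.trans ((hrt q).1 hq).2
    have hmono : StrictMonoOn m₀ (D.filter (s · = w) : Set ℚ) := fun p hp q hq =>
      hm₀ p (Finset.mem_filter.1 hp).1 q (Finset.mem_filter.1 hq).1
    have hmaps : ∀ p ∈ D.filter (s · = w), ((m₀ p : ℝ) : EReal) ∈ Ioo r t := by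
      intro p hp
      obtain ⟨hpD, hpw⟩ := Finset.mem_filter.1 hp
      exact (hrt _).1 (by rw [← hcomp p hpD, hpw])
    obtain ⟨h, hh, hhJ, hhm₀⟩ := exists_strictMono_extend_into_ereal_Ioo hlt _ m₀ hmono hmaps
    exact ⟨h, hh, fun q => (hrt _).2 (hhJ q),
      fun p hp hpw => hhm₀ p (Finset.mem_filter.2 ⟨hp, hpw⟩)⟩
  choose! H hHmono hfH hHm₀ using fiber
  exact ⟨fun q => H (s q) q,
    hs.strictMono_of_fiberwise hf (fun q => hHmono _ ⟨q, rfl⟩) (fun q => hfH _ ⟨q, rfl⟩ q),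
    fun p hp => hHm₀ _ ⟨p, rfl⟩ p hp rfl, funext fun q => (hfH _ ⟨q, rfl⟩ q).symm⟩
end

section
/- Let X, Y be countably infinite structures in a common language, A ⊆ X and C ⊆ Y. Suppose S is a set of finite partial homomorphisms from X to Y that is closed under restriction, has the forth property, and has the (A,C)-back property: for every m ∈ S and every y ∈ C there exists m' ∈ S extending m with some x ∈ A ∩ dom(m') satisfying m'(x) = y. Then every m ∈ S extends to a total homomorphism s : X → Y such that every y ∈ C has an s-preimage in A. -/
/-! Ordered by inclusion, the members of `S` form a poset in which, by the forth and back
properties, the maps defined at a given `x` and the maps hitting a given `y ∈ C` from `A` form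
countably many cofinal sets. By the Rasiowa–Sikorski lemma some ideal containing `G` meets all of
them. Its members are pairwise compatible, so their union is a monotone graph; it is total and
hits every `y ∈ C` from `A`, hence is the graph of the required map. -/

variable {X Y : Type*}

def IsMonotoneGraph [LE X] [LE Y] (R : Set (X × Y)) : Prop :=
  ∀ p ∈ R, ∀ q ∈ R, p.1 ≤ q.1 → p.2 ≤ q.2

theorem IsMonotoneGraph.biUnion_of_directedOn [LE X] [LE Y] {ι : Type*} [Preorder ι]
    {f : ι → Set (X × Y)} (hf : Monotone f) {I : Set ι} (hI : DirectedOn (· ≤ ·) I)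
    (h : ∀ i ∈ I, IsMonotoneGraph (f i)) : IsMonotoneGraph (⋃ i ∈ I, f i) := by
  simp only [IsMonotoneGraph, Set.mem_iUnion₂]
  rintro p ⟨i, hi, hp⟩ q ⟨j, hj, hq⟩
  obtain ⟨k, hk, hik, hjk⟩ := hI i hi j hj
  exact h k hk p (hf hik hp) q (hf hjk hq)

theorem IsMonotoneGraph.exists_monotone_eq [Preorder X] [PartialOrder Y] {R : Set (X × Y)}
    (hR : IsMonotoneGraph R) (htot : ∀ x, ∃ y, (x, y) ∈ R) :
    ∃ s : X → Y, Monotone s ∧ ∀ p ∈ R, s p.1 = p.2 := by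
  choose s hs using htot
  refine ⟨s, fun x x' hxx' => hR _ (hs x) _ (hs x') hxx', fun p hp => ?_⟩
  exact le_antisymm (hR _ (hs p.1) _ hp le_rfl) (hR _ hp _ (hs p.1) le_rfl)

def HasForthProperty (S : Set (Finset (X × Y))) : Prop :=
  ∀ G ∈ S, ∀ x : X, (∀ p ∈ G, p.1 ≠ x) → ∃ G' ∈ S, G ⊆ G' ∧ ∃ y : Y, (x, y) ∈ G'

def HasBackProperty (A : Set X) (C : Set Y) (S : Set (Finset (X × Y))) : Prop :=
  ∀ G ∈ S, ∀ y ∈ C, ∃ G' ∈ S, G ⊆ G' ∧ ∃ x ∈ A, (x, y) ∈ G'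

theorem HasForthProperty.isCofinal {S : Set (Finset (X × Y))} (hS : HasForthProperty S) (x : X) :
    IsCofinal {H : S | ∃ y, (x, y) ∈ H.1} := by
  rintro ⟨H, hH⟩
  by_cases hx : ∀ p ∈ H, p.1 ≠ x
  · obtain ⟨H', hH', hHH', hy⟩ := hS H hH x hx
    exact ⟨⟨H', hH'⟩, hy, hHH'⟩
  · push Not at hx
    obtain ⟨⟨_, y⟩, hp, rfl⟩ := hx
    exact ⟨⟨H, hH⟩, ⟨y, hp⟩, le_rfl⟩

theorem HasBackProperty.isCofinal {A : Set X} {C : Set Y} {S : Set (Finset (X × Y))}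
    (hS : HasBackProperty A C S) {y : Y} (hy : y ∈ C) :
    IsCofinal {H : S | ∃ x ∈ A, (x, y) ∈ H.1} := by
  rintro ⟨H, hH⟩
  obtain ⟨H', hH', hHH', hx⟩ := hS H hH y hy
  exact ⟨⟨H', hH'⟩, hx, hHH'⟩

theorem exists_monotone_extension_of_hasBackProperty [Preorder X] [PartialOrder Y] [Countable X]
    {A : Set X} {C : Set Y} (hC : C.Countable) {S : Set (Finset (X × Y))}
    (hmono : ∀ G ∈ S, IsMonotoneGraph (G : Set (X × Y)))
    (hforth : HasForthProperty S) (hback : HasBackProperty A C S) {G : Finset (X × Y)}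
    (hG : G ∈ S) :
    ∃ s : X → Y, Monotone s ∧ (∀ p ∈ G, s p.1 = p.2) ∧ ∀ y ∈ C, ∃ x ∈ A, s x = y := by
  have := hC.to_subtype
  have : Encodable (X ⊕ C) := Encodable.ofCountable _
  let tasks : X ⊕ C → Order.Cofinal S :=
    Sum.elim (fun x => ⟨_, hforth.isCofinal x⟩) (fun y => ⟨_, hback.isCofinal y.2⟩)
  let I := Order.idealOfCofinals ⟨G, hG⟩ tasks
  let R : Set (X × Y) := ⋃ H ∈ (I : Set S), (H.1 : Set (X × Y))
  have hR : IsMonotoneGraph R :=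
    IsMonotoneGraph.biUnion_of_directedOn (f := fun H : S => (H.1 : Set (X × Y)))
      (fun _ _ h => Finset.coe_subset.2 h) I.directed fun H _ => hmono H.1 H.2
  have mem_R {H : S} (hH : H ∈ I) {p : X × Y} (hp : p ∈ H.1) : p ∈ R :=
    Set.mem_biUnion hH hp
  obtain ⟨s, hs, hsR⟩ := hR.exists_monotone_eq fun x => by
    obtain ⟨H, ⟨y, hy⟩, hHI⟩ := Order.cofinal_meets_idealOfCofinals _ tasks (.inl x)
    exact ⟨y, mem_R hHI hy⟩
  refine ⟨s, hs, fun p hp => hsR p (mem_R (Order.mem_idealOfCofinals _ tasks) hp), ?_⟩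
  intro y hy
  obtain ⟨H, ⟨x, hx, hxy⟩, hHI⟩ := Order.cofinal_meets_idealOfCofinals _ tasks (.inr ⟨y, hy⟩)
  exact ⟨x, hx, hsR _ (mem_R hHI hxy)⟩

theorem AC_back_and_forth_extension_general (A C : Set ℚ) (S : Set (Finset (ℚ × ℚ)))
    (hmono : ∀ G ∈ S, ∀ p ∈ G, ∀ q ∈ G,
      Prod.fst p ≤ Prod.fst q → Prod.snd p ≤ Prod.snd q)
    (hforth : ∀ G ∈ S, ∀ x : ℚ, (∀ p ∈ G, Prod.fst p ≠ x) →
      ∃ G' ∈ S, G ⊆ G' ∧ ∃ y : ℚ, (x, y) ∈ G')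
    (hback : ∀ G ∈ S, ∀ y ∈ C, ∃ G' ∈ S, G ⊆ G' ∧ ∃ x ∈ A, (x, y) ∈ G') :
    ∀ G ∈ S, ∃ s : ℚ → ℚ, Monotone s ∧
      (∀ p ∈ G, s (Prod.fst p) = Prod.snd p) ∧
      ∀ y ∈ C, ∃ x ∈ A, s x = y :=
  fun _ hG => exists_monotone_extension_of_hasBackProperty C.to_countable hmono hforth hback hG

/-- `(A,C)`-Back&Forth systems on `(ℚ, ≤)`: if a set `S` of finite partial
monotone maps (represented by their graphs) is closed under restriction, has the
forth property, and has the `(A,C)`-back property, then every member of `S`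
extends to a total monotone map `s` such that every `y ∈ C` has an `s`-preimage
in `A`. -/
theorem AC_back_and_forth_extension (A C : Set ℚ) (S : Set (Finset (ℚ × ℚ)))
    (hmono : ∀ G ∈ S, ∀ p ∈ G, ∀ q ∈ G,
      Prod.fst p ≤ Prod.fst q → Prod.snd p ≤ Prod.snd q)
    (hres : ∀ G ∈ S, ∀ G' : Finset (ℚ × ℚ), G' ⊆ G → G' ∈ S)
    (hforth : ∀ G ∈ S, ∀ x : ℚ, (∀ p ∈ G, Prod.fst p ≠ x) →
      ∃ G' ∈ S, G ⊆ G' ∧ ∃ y : ℚ, (x, y) ∈ G')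
    (hback : ∀ G ∈ S, ∀ y ∈ C, ∃ G' ∈ S, G ⊆ G' ∧ ∃ x ∈ A, (x, y) ∈ G') :
    ∀ G ∈ S, ∃ s : ℚ → ℚ, Monotone s ∧
      (∀ p ∈ G, s (Prod.fst p) = Prod.snd p) ∧
      ∀ y ∈ C, ∃ x ∈ A, s x = y :=
  AC_back_and_forth_extension_general A C S hmono hforth hback
end

section
/- Let S be a monoid with a topology 𝒯, D ⊆ S with a topology 𝒯_D, and suppose (S,𝒯) has Pseudo-Property X̄ of length m with respect to (D,𝒯_D). Let (H,∘,𝒪) be a topological monoid (semigroup with continuous multiplication) and φ : S → H a surjective monoid homomorphism whose restriction φ|_D : (D,𝒯_D) → (H,𝒪) is continuous. Then φ : (S,𝒯) → (H,𝒪) is continuous. -/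
/-!
Near `s`, left-multiplying by `φ p` undoes `e`, so `φ u = φ p * φ (h m) * φ (a (m-1)) * ⋯ * φ (h 0)`
where, by condition (iii), the letters `a i ∈ D` may be taken in arbitrary open neighbourhoods of the
letters for `s`. Since `φ` is continuous on `D` and multiplication in `H` is continuous, such a product
stays in any prescribed neighbourhood of `φ s` once those neighbourhoods are small enough.
-/

/-- The alternating product `h (n) * a (n-1) * h (n-1) * ⋯ * a 0 * h 0`. -/
def chainProd {S : Type*} [Monoid S] (h a : ℕ → S) : ℕ → S
  | 0 => h 0
  | n + 1 => h (n + 1) * a n * chainProd h a n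

theorem map_chainProd {S H F : Type*} [Monoid S] [Monoid H] [FunLike F S H]
    [MonoidHomClass F S H] (φ : F) (h a : ℕ → S) (n : ℕ) :
    φ (chainProd h a n) = chainProd (fun i => φ (h i)) (fun i => φ (a i)) n := by
  induction n with
  | zero => rfl
  | succ n ih => simp only [chainProd, map_mul, ih]

theorem exists_open_chainProd_comp_mem {D H : Type*} [TopologicalSpace D] [Monoid H]
    [TopologicalSpace H] [ContinuousMul H] {ψ : D → H} (hψ : Continuous ψ) (c : ℕ → H)
    (a : ℕ → D) (n : ℕ) {W : Set H} (hW : IsOpen W) (ha : chainProd c (fun i => ψ (a i)) n ∈ W) :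
    ∃ V : ℕ → Set D, (∀ i < n, IsOpen (V i) ∧ a i ∈ V i) ∧
      ∀ v : ℕ → D, (∀ i < n, v i ∈ V i) → chainProd c (fun i => ψ (v i)) n ∈ W := by
  induction n generalizing W with
  | zero => exact ⟨fun _ => Set.univ, by simp, fun _ _ => ha⟩
  | succ n ih =>
    let step : D × H → H := fun q => c (n + 1) * ψ q.1 * q.2
    have hstep : Continuous step := by fun_prop
    obtain ⟨Vn, W', hVn, hW', haVn, haW', hsub⟩ :=
      isOpen_prod_iff.1 (hW.preimage hstep) (a n) (chainProd c (fun i => ψ (a i)) n) ha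
    obtain ⟨V, hV, hVW'⟩ := ih hW' haW'
    refine ⟨Function.update V n Vn, fun i hi => ?_, fun v hv => ?_⟩
    · rcases (Nat.lt_succ_iff_lt_or_eq.1 hi) with hi | rfl
      · simpa [hi.ne] using hV i hi
      · simpa using ⟨hVn, haVn⟩
    · have hvn : v n ∈ Vn := by simpa using hv n n.lt_succ_self
      have hvW' : chainProd c (fun i => ψ (v i)) n ∈ W' :=
        hVW' v fun i hi => by simpa [hi.ne] using hv i (hi.trans n.lt_succ_self)
      exact hsub (Set.mk_mem_prod hvn hvW')

theorem pseudo_property_X_lifts_continuity_general {S H : Type*} [Monoid S] [Monoid H]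
    (TS : TopologicalSpace S) (D : Set S) (TD : TopologicalSpace D)
    (TH : TopologicalSpace H) (hHmul : @ContinuousMul H TH _)
    (m : ℕ)
    (hX : ∀ s : S, ∃ (e : S) (hh : ℕ → S) (a : ℕ → D),
      (∃ p : S, p * e = 1) ∧
      e * s = chainProd hh (fun i => (a i : S)) m ∧
      ∀ V : ℕ → Set D, (∀ i < m, @IsOpen D TD (V i) ∧ a i ∈ V i) →
        ∃ U : Set S, @IsOpen S TS U ∧ s ∈ U ∧
          ∀ u ∈ U, ∃ v : ℕ → D, (∀ i < m, v i ∈ V i) ∧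
            e * u = chainProd hh (fun i => (v i : S)) m)
    (φ : S →* H)
    (hφD : @Continuous D H TD TH (fun d => φ (d : S))) :
    @Continuous S H TS TH φ := by
  refine continuous_iff_continuousAt.2 fun s => tendsto_nhds.2 fun W hW hsW => ?_
  obtain ⟨e, hh, a, ⟨p, hpe⟩, hes, hU⟩ := hX s
  have hcancel (u : S) : φ p * φ (e * u) = φ u := by
    rw [← map_mul, ← mul_assoc, hpe, one_mul]
  have has : φ p * chainProd (fun i => φ (hh i)) (fun i => φ (a i : S)) m ∈ W := by
    rwa [← map_chainProd, ← hes, hcancel]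
  obtain ⟨V, hV, hVW⟩ := exists_open_chainProd_comp_mem hφD (fun i => φ (hh i)) a m
    (hW.preimage (continuous_const_mul (φ p))) has
  obtain ⟨U, hUo, hsU, hUV⟩ := hU V hV
  filter_upwards [hUo.mem_nhds hsU] with u hu
  obtain ⟨v, hv, heu⟩ := hUV u hu
  simpa only [Set.mem_preimage, ← map_chainProd, ← heu, hcancel] using hVW v hv

/-- Pseudo-Property X̄ lifting of continuity: if `(S, 𝒯)` has Pseudo-Property X̄ of
length `m` with respect to `(D, 𝒯_D)`, `(H, 𝒪)` is a topological monoid, and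
`φ : S →* H` is a surjective monoid homomorphism whose restriction to `D` is
continuous, then `φ` is continuous on all of `S`. -/
theorem pseudo_property_X_lifts_continuity {S H : Type*} [Monoid S] [Monoid H]
    (TS : TopologicalSpace S) (D : Set S) (TD : TopologicalSpace D)
    (TH : TopologicalSpace H) (hHmul : @ContinuousMul H TH _)
    (m : ℕ)
    (hX : ∀ s : S, ∃ (e : S) (hh : ℕ → S) (a : ℕ → D),
      (∃ p : S, p * e = 1) ∧
      e * s = chainProd hh (fun i => (a i : S)) m ∧
      ∀ V : ℕ → Set D, (∀ i < m, @IsOpen D TD (V i) ∧ a i ∈ V i) →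
        ∃ U : Set S, @IsOpen S TS U ∧ s ∈ U ∧
          ∀ u ∈ U, ∃ v : ℕ → D, (∀ i < m, v i ∈ V i) ∧
            e * u = chainProd hh (fun i => (v i : S)) m)
    (φ : S →* H) (hφsurj : Function.Surjective φ)
    (hφD : @Continuous D H TD TH (fun d => φ (d : S))) :
    @Continuous S H TS TH φ :=
  pseudo_property_X_lifts_continuity_general TS D TD TH hHmul m hX φ hφD
end

section
/- Let g : ℚ → ℚ be a generic injection and let b : ℚ → ℚ be an order automorphism with extension b̄ : ℝ → ℝ. Then the composition b ∘ g is continuous at every irrational point, in the sense that for every irrational γ, sup (b∘g)((-∞,γ)∩ℚ) = inf (b∘g)((γ,+∞)∩ℚ). Consequently, the set of irrational discontinuity points of h ∘ b ∘ g, for any strictly monotone h : ℚ → ℚ, equals ḡ⁻¹( b̄⁻¹(Dc^ℚ-irr(h)) ∩ Img(ḡ) ) ∩ (ℝ∖ℚ), where ḡ, b̄ denote the canonical monotone extensions to ℝ and Dc^ℚ-irr(h) is the set of irrational discontinuity points of h. -/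
/-- `sup s((-∞,γ)∩ℚ)` in the extended reals. -/
noncomputable def eSupBelow (s : ℚ → ℚ) (γ : ℝ) : EReal :=
  sSup ((fun p : ℚ => ((s p : ℝ) : EReal)) '' {p : ℚ | (p : ℝ) < γ})

/-- `inf s((γ,+∞)∩ℚ)` in the extended reals. -/
noncomputable def eInfAbove (s : ℚ → ℚ) (γ : ℝ) : EReal :=
  sInf ((fun p : ℚ => ((s p : ℝ) : EReal)) '' {p : ℚ | γ < (p : ℝ)})

/-- The set of irrational discontinuity points of `s`. -/
noncomputable def DcIrr (s : ℚ → ℚ) : Set ℝ :=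
  {γ : ℝ | Irrational γ ∧ eSupBelow s γ < eInfAbove s γ}

/-!
At an irrational `γ` the generic injection `g` has a one-sided limit `α = ḡ(γ)` from both sides,
and `α` is irrational because it is a limit point of the image of `g`. An order automorphism `b`
of `ℚ` has no gaps, so it is continuous at the irrational `α` with irrational value `β = b̄(α)`.
Since `g` is strictly monotone, the images of the rationals below (above) `γ` are cofinal
(coinitial) among the rationals below (above) `α`, and similarly for `b` at `α`. Hence for every
monotone `s` the one-sided sup and inf of `s ∘ b ∘ g` at `γ` are those of `s` at `β`.
-/

open Set

def HasLimitAt (f : ℚ → ℚ) (γ α : ℝ) : Prop :=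
  eSupBelow f γ = α ∧ eInfAbove f γ = α

section

variable {f s : ℚ → ℚ} {γ α : ℝ}

lemma coe_le_eSupBelow {p : ℚ} (hp : (p : ℝ) < γ) : ((f p : ℝ) : EReal) ≤ eSupBelow f γ :=
  le_sSup ⟨p, hp, rfl⟩

lemma eInfAbove_le_coe {p : ℚ} (hp : γ < (p : ℝ)) : eInfAbove f γ ≤ ((f p : ℝ) : EReal) :=
  sInf_le ⟨p, hp, rfl⟩

lemma eSupBelow_le_eInfAbove (hf : Monotone f) : eSupBelow f γ ≤ eInfAbove f γ := by
  refine sSup_le <| forall_mem_image.2 fun p hp => le_sInf <| forall_mem_image.2 fun q hq => ?_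
  exact EReal.coe_le_coe_iff.2 <| Rat.cast_le.2 <| hf <|
    Rat.cast_le.1 ((show (p : ℝ) < γ from hp).trans hq).le

lemma exists_hasLimitAt_of_eq (h : eSupBelow f γ = eInfAbove f γ) :
    ∃ α, HasLimitAt f γ α := by
  obtain ⟨p₀, hp₀⟩ := exists_rat_lt γ
  obtain ⟨p₁, hp₁⟩ := exists_rat_gt γ
  have hbot : eSupBelow f γ ≠ ⊥ :=
    ne_bot_of_le_ne_bot (EReal.coe_ne_bot (f p₀)) (coe_le_eSupBelow hp₀)
  have htop : eSupBelow f γ ≠ ⊤ :=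
    ne_top_of_le_ne_top (EReal.coe_ne_top (f p₁)) (h ▸ eInfAbove_le_coe hp₁)
  have hα := (EReal.coe_toReal htop hbot).symm
  exact ⟨_, hα, h ▸ hα⟩

lemma eSupBelow_eq_eInfAbove_of_surjective (hf : Monotone f) (hsurj : Function.Surjective f)
    (hγ : Irrational γ) : eSupBelow f γ = eInfAbove f γ := by
  refine (eSupBelow_le_eInfAbove hf).antisymm (not_lt.1 fun hgap => ?_)
  obtain ⟨m, hm_sup, hm_inf⟩ := EReal.exists_rat_btwn_of_lt hgap
  obtain ⟨r, rfl⟩ := hsurj m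
  rcases lt_trichotomy (r : ℝ) γ with hr | hr | hr
  · exact (coe_le_eSupBelow hr).not_gt hm_sup
  · exact hγ ⟨r, hr⟩
  · exact (eInfAbove_le_coe hr).not_gt hm_inf

namespace HasLimitAt

lemma lt_of_lt (h : HasLimitAt f γ α) (hf : StrictMono f) {p : ℚ} (hp : (p : ℝ) < γ) :
    (f p : ℝ) < α := by
  obtain ⟨p', hpp', hp'γ⟩ := exists_rat_btwn hp
  have : ((f p' : ℝ) : EReal) ≤ α := h.1 ▸ coe_le_eSupBelow hp'γ
  exact lt_of_lt_of_le (Rat.cast_lt.2 (hf (Rat.cast_lt.1 hpp'))) (EReal.coe_le_coe_iff.1 this)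

lemma gt_of_gt (h : HasLimitAt f γ α) (hf : StrictMono f) {p : ℚ} (hp : γ < (p : ℝ)) :
    α < (f p : ℝ) := by
  obtain ⟨p', hγp', hp'p⟩ := exists_rat_btwn hp
  have : (α : EReal) ≤ ((f p' : ℝ) : EReal) := h.2 ▸ eInfAbove_le_coe hγp'
  exact lt_of_le_of_lt (EReal.coe_le_coe_iff.1 this) (Rat.cast_lt.2 (hf (Rat.cast_lt.1 hp'p)))

lemma exists_lt_of_lt (h : HasLimitAt f γ α) {x : ℝ} (hx : x < α) :
    ∃ p : ℚ, (p : ℝ) < γ ∧ x < f p := by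
  obtain ⟨_, ⟨p, hp, rfl⟩, hxp⟩ := lt_sSup_iff.1 (h.1 ▸ EReal.coe_lt_coe_iff.2 hx)
  exact ⟨p, hp, EReal.coe_lt_coe_iff.1 hxp⟩

lemma exists_gt_of_gt (h : HasLimitAt f γ α) {x : ℝ} (hx : α < x) :
    ∃ p : ℚ, γ < (p : ℝ) ∧ (f p : ℝ) < x := by
  obtain ⟨_, ⟨p, hp, rfl⟩, hpx⟩ := sInf_lt_iff.1 (h.2 ▸ EReal.coe_lt_coe_iff.2 hx)
  exact ⟨p, hp, EReal.coe_lt_coe_iff.1 hpx⟩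

lemma eSupBelow_comp (h : HasLimitAt f γ α) (hf : StrictMono f) (hs : Monotone s) :
    eSupBelow (s ∘ f) γ = eSupBelow s α := by
  apply le_antisymm
  · exact sSup_le <| forall_mem_image.2 fun p hp => le_sSup ⟨f p, h.lt_of_lt hf hp, rfl⟩
  · refine sSup_le <| forall_mem_image.2 fun m hm => ?_
    obtain ⟨p, hp, hmp⟩ := h.exists_lt_of_lt hm
    calc ((s m : ℝ) : EReal) ≤ ((s (f p) : ℝ) : EReal) :=
          EReal.coe_le_coe_iff.2 <| Rat.cast_le.2 <| hs <| Rat.cast_le.1 hmp.le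
      _ ≤ eSupBelow (s ∘ f) γ := coe_le_eSupBelow (f := s ∘ f) hp

lemma eInfAbove_comp (h : HasLimitAt f γ α) (hf : StrictMono f) (hs : Monotone s) :
    eInfAbove (s ∘ f) γ = eInfAbove s α := by
  apply le_antisymm
  · refine le_sInf <| forall_mem_image.2 fun m hm => ?_
    obtain ⟨p, hp, hpm⟩ := h.exists_gt_of_gt hm
    calc eInfAbove (s ∘ f) γ ≤ ((s (f p) : ℝ) : EReal) := eInfAbove_le_coe (f := s ∘ f) hp
      _ ≤ ((s m : ℝ) : EReal) :=
          EReal.coe_le_coe_iff.2 <| Rat.cast_le.2 <| hs <| Rat.cast_le.1 hpm.le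
  · exact le_sInf <| forall_mem_image.2 fun p hp => sInf_le ⟨f p, h.gt_of_gt hf hp, rfl⟩

lemma comp {b : ℚ → ℚ} {β : ℝ} (h : HasLimitAt f γ α) (hf : StrictMono f) (hb : Monotone b)
    (hbα : HasLimitAt b α β) : HasLimitAt (b ∘ f) γ β :=
  ⟨(h.eSupBelow_comp hf hb).trans hbα.1, (h.eInfAbove_comp hf hb).trans hbα.2⟩

lemma mem_closure_range_diff (h : HasLimitAt f γ α) (hf : StrictMono f) :
    α ∈ closure ((range fun q : ℚ => (f q : ℝ)) \ {α}) := by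
  refine Metric.mem_closure_iff.2 fun ε hε => ?_
  obtain ⟨p, hp, hεp⟩ := h.exists_lt_of_lt (sub_lt_self α hε)
  have hpα := h.lt_of_lt hf hp
  refine ⟨f p, ⟨⟨p, rfl⟩, hpα.ne⟩, ?_⟩
  rw [Real.dist_eq, abs_of_pos (sub_pos.2 hpα)]
  linarith

lemma irrational_of_surjective (h : HasLimitAt f γ α) (hf : StrictMono f)
    (hsurj : Function.Surjective f) (hγ : Irrational γ) : Irrational α := by
  rintro ⟨c, rfl⟩
  obtain ⟨r, rfl⟩ := hsurj c
  rcases lt_trichotomy (r : ℝ) γ with hr | hr | hr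
  · exact (h.lt_of_lt hf hr).false
  · exact hγ ⟨r, hr⟩
  · exact (h.gt_of_gt hf hr).false

lemma sSup_eq (h : HasLimitAt f γ α) (hf : StrictMono f) :
    sSup {x : ℝ | ∃ p : ℚ, (p : ℝ) < γ ∧ x = f p} = α := by
  obtain ⟨p₀, hp₀⟩ := exists_rat_lt γ
  refine IsLUB.csSup_eq ⟨?_, fun u hu => not_lt.1 fun hlt => ?_⟩ ⟨f p₀, p₀, hp₀, rfl⟩
  · rintro _ ⟨p, hp, rfl⟩
    exact (h.lt_of_lt hf hp).le
  · obtain ⟨p, hp, hup⟩ := h.exists_lt_of_lt hlt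
    exact (hu ⟨p, hp, rfl⟩).not_gt hup

end HasLimitAt

end

theorem discontinuities_of_composition_general (g b h : ℚ → ℚ) (gbar bbar : ℝ → ℝ)
    (hg_sm : StrictMono g)
    (hg_cont : ∀ γ : ℝ, Irrational γ → eSupBelow g γ = eInfAbove g γ)
    (hg_LP : ∀ γ : ℝ, γ ∈ closure ((Set.range fun q : ℚ => (g q : ℝ)) \ {γ}) →
      Irrational γ)
    (hb_bij : Function.Bijective b) (hb_ord : ∀ x y : ℚ, x ≤ y ↔ b x ≤ b y)
    (hgbar_irr : ∀ γ : ℝ, Irrational γ →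
      gbar γ = sSup {x : ℝ | ∃ p : ℚ, (p : ℝ) < γ ∧ x = g p})
    (hbbar_irr : ∀ γ : ℝ, Irrational γ →
      bbar γ = sSup {x : ℝ | ∃ p : ℚ, (p : ℝ) < γ ∧ x = b p})
    (hh : StrictMono h) :
    (∀ γ : ℝ, Irrational γ → eSupBelow (b ∘ g) γ = eInfAbove (b ∘ g) γ) ∧
    DcIrr (h ∘ b ∘ g) =
      gbar ⁻¹' (bbar ⁻¹' DcIrr h ∩ Set.range gbar) ∩ {γ : ℝ | Irrational γ} := by
  have hb : StrictMono b := strictMono_of_le_iff_le hb_ord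
  have key : ∀ γ, Irrational γ →
      ∃ β, Irrational β ∧ bbar (gbar γ) = β ∧ HasLimitAt (b ∘ g) γ β := by
    intro γ hγ
    obtain ⟨α, hα⟩ := exists_hasLimitAt_of_eq (hg_cont γ hγ)
    have hα_irr : Irrational α := hg_LP α (hα.mem_closure_range_diff hg_sm)
    obtain ⟨β, hβ⟩ := exists_hasLimitAt_of_eq
      (eSupBelow_eq_eInfAbove_of_surjective hb.monotone hb_bij.2 hα_irr)
    refine ⟨β, hβ.irrational_of_surjective hb hb_bij.2 hα_irr, ?_, hα.comp hg_sm hb.monotone hβ⟩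
    rw [hgbar_irr γ hγ, hα.sSup_eq hg_sm, hbbar_irr α hα_irr, hβ.sSup_eq hb]
  refine ⟨fun γ hγ => ?_, ?_⟩
  · obtain ⟨β, -, -, hβ⟩ := key γ hγ
    exact hβ.1.trans hβ.2.symm
  ext γ
  by_cases hγ : Irrational γ
  · obtain ⟨β, hβ_irr, hbar, hβ⟩ := key γ hγ
    simp [DcIrr, hγ, hβ_irr, hbar, hβ.eSupBelow_comp (hb.comp hg_sm) hh.monotone,
      hβ.eInfAbove_comp (hb.comp hg_sm) hh.monotone]
  · simp [DcIrr, hγ]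

/-- Let `g` be a generic injection and `b` an order automorphism of `ℚ` with
canonical monotone extensions `gbar`, `bbar` to `ℝ`.  Then `b ∘ g` is continuous
at every irrational point; and for any strictly monotone `h : ℚ → ℚ`, the set of
irrational discontinuity points of `h ∘ b ∘ g` equals
`gbar⁻¹( bbar⁻¹(DcIrr h) ∩ Img(gbar) ) ∩ (ℝ ∖ ℚ)`. -/
theorem discontinuities_of_composition (g b h : ℚ → ℚ) (gbar bbar : ℝ → ℝ)
    (hg_sm : StrictMono g)
    (hg_ub : ∀ q : ℚ, ∃ x : ℚ, g x < q) (hg_ua : ∀ q : ℚ, ∃ x : ℚ, q < g x)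
    (hg_cont : ∀ γ : ℝ, Irrational γ → eSupBelow g γ = eInfAbove g γ)
    (hg_LP : ∀ γ : ℝ, γ ∈ closure ((Set.range fun q : ℚ => (g q : ℝ)) \ {γ}) →
      Irrational γ)
    (hb_bij : Function.Bijective b) (hb_ord : ∀ x y : ℚ, x ≤ y ↔ b x ≤ b y)
    (hgbar_q : ∀ q : ℚ, gbar q = g q)
    (hgbar_irr : ∀ γ : ℝ, Irrational γ →
      gbar γ = sSup {x : ℝ | ∃ p : ℚ, (p : ℝ) < γ ∧ x = g p})
    (hbbar_q : ∀ q : ℚ, bbar q = b q)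
    (hbbar_irr : ∀ γ : ℝ, Irrational γ →
      bbar γ = sSup {x : ℝ | ∃ p : ℚ, (p : ℝ) < γ ∧ x = b p})
    (hh : StrictMono h) :
    (∀ γ : ℝ, Irrational γ → eSupBelow (b ∘ g) γ = eInfAbove (b ∘ g) γ) ∧
    DcIrr (h ∘ b ∘ g) =
      gbar ⁻¹' (bbar ⁻¹' DcIrr h ∩ Set.range gbar) ∩ {γ : ℝ | Irrational γ} :=
  discontinuities_of_composition_general g b h gbar bbar hg_sm hg_cont hg_LP hb_bij hb_ord hgbar_irr
    hbbar_irr hh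
end

section
/- Let f : ℚ → ℚ be monotone and surjective with the property that for every w ∈ ℚ the preimage f⁻¹({w}) has neither a greatest nor a least element. For monotone σ, ι : ℚ → ℚ, define P_q^B := f⁻¹({σ(q)}) for each q ∈ ℚ. Then for all q, y ∈ ℚ: (1) y ∈ P_q^B iff σ(q) = f(y); (2) there exists u < y with u ∈ P_q^B iff σ(q) ≤ f(y); (3) there exists u > y with u ∈ P_q^B iff σ(q) ≥ f(y). -/
section MonotoneFibre

variable {α β : Type*} [LinearOrder α] [PartialOrder β] {f : α → β}

theorem Monotone.exists_lt_and_eq_iff_le (hf : Monotone f) (hfs : Function.Surjective f)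
    (hmin : ∀ x, ∃ x' < x, f x' = f x) (y : α) (w : β) :
    (∃ u < y, f u = w) ↔ w ≤ f y := by
  refine ⟨fun ⟨u, hu, hfu⟩ => hfu ▸ hf hu.le, fun hw => ?_⟩
  obtain ⟨x, rfl⟩ := hfs w
  rcases lt_or_ge x y with hxy | hyx
  · exact ⟨x, hxy, rfl⟩
  · have hyx_eq : f y = f x := le_antisymm (hf hyx) hw
    obtain ⟨x', hx'y, hfx'⟩ := hmin y
    exact ⟨x', hx'y, hfx'.trans hyx_eq⟩

theorem Monotone.exists_gt_and_eq_iff_ge (hf : Monotone f) (hfs : Function.Surjective f)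
    (hmax : ∀ x, ∃ x' > x, f x' = f x) (y : α) (w : β) :
    (∃ u > y, f u = w) ↔ f y ≤ w :=
  hf.dual.exists_lt_and_eq_iff_le (α := αᵒᵈ) (β := βᵒᵈ) hfs hmax y w

end MonotoneFibre

theorem predicate_interpretation_in_B_general (f σ : ℚ → ℚ) (hf : Monotone f)
    (hfs : Function.Surjective f)
    (hfib : ∀ w : ℚ, (∀ x : ℚ, f x = w → ∃ x' : ℚ, x' < x ∧ f x' = w) ∧
      (∀ x : ℚ, f x = w → ∃ x' : ℚ, x < x' ∧ f x' = w)) :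
    ∀ q y : ℚ,
      (y ∈ f ⁻¹' {σ q} ↔ σ q = f y) ∧
      ((∃ u : ℚ, u < y ∧ u ∈ f ⁻¹' {σ q}) ↔ σ q ≤ f y) ∧
      ((∃ u : ℚ, y < u ∧ u ∈ f ⁻¹' {σ q}) ↔ f y ≤ σ q) := by
  intro q y
  simp only [Set.mem_preimage, Set.mem_singleton_iff]
  exact ⟨eq_comm, hf.exists_lt_and_eq_iff_le hfs (fun x => (hfib (f x)).1 x rfl) y (σ q),
    hf.exists_gt_and_eq_iff_ge hfs (fun x => (hfib (f x)).2 x rfl) y (σ q)⟩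

/-- For a monotone surjection `f : ℚ → ℚ` all of whose fibres have neither a
greatest nor a least element, and monotone `σ, ι : ℚ → ℚ`, with
`P_q^B := f⁻¹({σ q})`: (1) `y ∈ P_q^B` iff `σ q = f y`; (2) `∃ u < y` with
`u ∈ P_q^B` iff `σ q ≤ f y`; (3) `∃ u > y` with `u ∈ P_q^B` iff `σ q ≥ f y`. -/
theorem predicate_interpretation_in_B (f σ ι : ℚ → ℚ) (hf : Monotone f)
    (hfs : Function.Surjective f) (hσ : Monotone σ) (hι : Monotone ι)
    (hfib : ∀ w : ℚ, (∀ x : ℚ, f x = w → ∃ x' : ℚ, x' < x ∧ f x' = w) ∧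
      (∀ x : ℚ, f x = w → ∃ x' : ℚ, x < x' ∧ f x' = w)) :
    ∀ q y : ℚ,
      (y ∈ f ⁻¹' {σ q} ↔ σ q = f y) ∧
      ((∃ u : ℚ, u < y ∧ u ∈ f ⁻¹' {σ q}) ↔ σ q ≤ f y) ∧
      ((∃ u : ℚ, y < u ∧ u ∈ f ⁻¹' {σ q}) ↔ f y ≤ σ q) :=
  predicate_interpretation_in_B_general f σ hf hfs hfib
end
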